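/- arXiv:1812.00501 — 9 statements merged into one kernel-verified Lean document; each statement's English description precedes it below -/
import Mathlib

section
/- The six optimal values satisfy W_ps ≤ W_pr = W_pa = W_da = W_dr = W_ds. -/
open Finset

noncomputable section

/-- `nxt z l` is `z (l+1)`, with the convention `z (k+1) = 0`. -/
def nxt {k : ℕ} (z : Fin k → ℝ) (l : Fin k) : ℝ :=
  if h : (l : ℕ) + 1 < k then z ⟨(l : ℕ) + 1, h⟩ else 0

/-- `z` is an ordered allocation: `z i l ≥ z i (l+1)` for all `i, l` (with `z i (k+1) = 0`). -/
def OrdAlloc {n k : ℕ} (z : Fin n → Fin k → ℝ) : Prop := ∀ i l, nxt (z i) l ≤ z i l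

/-- Doubly stochastic `k × k` matrix. -/
def DS {k : ℕ} (M : Fin k → Fin k → ℝ) : Prop :=
  (∀ s t, 0 ≤ M s t) ∧ (∀ s, ∑ t, M s t = 1) ∧ (∀ t, ∑ s, M s t = 1)

/-- The permutation matrix of `π`. -/
def permMat {k : ℕ} (π : Equiv.Perm (Fin k)) : Fin k → Fin k → ℝ :=
  fun s t => if π s = t then 1 else 0

/-- Aggregate utility `U(z) = ∑ i, ∑ l, h i l * v i (z i l)`. -/
def U {n k : ℕ} (h : Fin n → Fin k → ℝ) (v : Fin n → ℝ → ℝ)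
    (z : Fin n → Fin k → ℝ) : ℝ :=
  ∑ i, ∑ l, h i l * v i (z i l)

/-- Lagrangian of the system problem. -/
def ThS {n m k : ℕ} (h : Fin n → Fin k → ℝ) (v : Fin n → ℝ → ℝ)
    (c : Fin m → ℝ) (J : Fin n → Finset (Fin m))
    (π : Fin n → Equiv.Perm (Fin k)) (z : Fin n → Fin k → ℝ)
    (lam : Fin m → Fin k → ℝ) : ℝ :=
  U h v z + ∑ j, ∑ l, lam j l * (c j - ∑ i ∈ univ.filter (fun i => j ∈ J i), z i (π i l))

/-- Lagrangian of the relaxed system problem (doubly stochastic matrices). -/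
def ThR {n m k : ℕ} (h : Fin n → Fin k → ℝ) (v : Fin n → ℝ → ℝ)
    (c : Fin m → ℝ) (J : Fin n → Finset (Fin m))
    (M : Fin n → Fin k → Fin k → ℝ) (z : Fin n → Fin k → ℝ)
    (lam : Fin m → Fin k → ℝ) : ℝ :=
  U h v z + ∑ j, ∑ l, lam j l *
    (c j - ∑ i ∈ univ.filter (fun i => j ∈ J i), ∑ t, M i l t * z i t)

/-- Lagrangian of the average system problem. -/
def ThA {n m k : ℕ} (h : Fin n → Fin k → ℝ) (v : Fin n → ℝ → ℝ)
    (c : Fin m → ℝ) (J : Fin n → Finset (Fin m))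
    (z : Fin n → Fin k → ℝ) (lamb : Fin m → ℝ) : ℝ :=
  U h v z + ∑ j, lamb j *
    (c j - ∑ i ∈ univ.filter (fun i => j ∈ J i), (1 / (k : ℝ)) * ∑ l, z i l)

def gfun {n m k : ℕ} (J : Fin n → Finset (Fin m)) (z : Fin n → Fin k → ℝ) (j : Fin m) : ℝ :=
  ∑ i ∈ univ.filter (fun i => j ∈ J i), (1 / (k : ℝ)) * ∑ l, z i l

lemma ThA_eq {n m k : ℕ} (h : Fin n → Fin k → ℝ) (v : Fin n → ℝ → ℝ)
    (c : Fin m → ℝ) (J : Fin n → Finset (Fin m))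
    (z : Fin n → Fin k → ℝ) (lamb : Fin m → ℝ) :
    ThA h v c J z lamb = U h v z + ∑ j, lamb j * (c j - gfun J z j) := rfl

lemma sum_filter_swap {n m : ℕ} {α : Type*} [AddCommMonoid α] (J : Fin n → Finset (Fin m))
    (f : Fin n → Fin m → α) :
    ∑ j, ∑ i ∈ univ.filter (fun i => j ∈ J i), f i j
      = ∑ i, ∑ j ∈ univ.filter (fun j => j ∈ J i), f i j := by
  simp only [Finset.sum_filter]
  exact Finset.sum_comm

lemma nxt_nonneg_aux {k : ℕ} {z : Fin k → ℝ} (hz : ∀ l, nxt z l ≤ z l) : ∀ l : Fin k, 0 ≤ z l := by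
  have key : ∀ d : ℕ, ∀ l : Fin k, k - (l : ℕ) ≤ d → 0 ≤ z l := by
    intro d
    induction d with
    | zero => intro l hl; have := l.isLt; omega
    | succ d ih =>
      intro l hl
      by_cases hcase : (l : ℕ) + 1 < k
      · have h1 : 0 ≤ z ⟨(l : ℕ) + 1, hcase⟩ := ih ⟨(l : ℕ) + 1, hcase⟩ (by simp only [Fin.val_mk]; omega)
        have h2 := hz l
        rw [nxt, dif_pos hcase] at h2
        linarith
      · have h2 := hz l
        rw [nxt, dif_neg hcase] at h2
        exact h2
  exact fun l => key k l (by omega)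

lemma ordAlloc_nonneg {n k : ℕ} {z : Fin n → Fin k → ℝ} (hz : OrdAlloc z) (i : Fin n) (l : Fin k) :
    0 ≤ z i l := nxt_nonneg_aux (hz i) l

lemma ordAlloc_zero {n k : ℕ} : OrdAlloc (fun (_ : Fin n) (_ : Fin k) => (0:ℝ)) := by
  intro i l
  by_cases hcase : (l : ℕ) + 1 < k <;> simp [nxt, hcase]

lemma aux_nonpos {a b : ℝ} (H : ∀ t : ℝ, 0 < t → a * t < b) : a ≤ 0 := by
  by_contra hpos
  push_neg at hpos
  have h1 := H (max 1 (b / a)) (lt_of_lt_of_le one_pos (le_max_left _ _))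
  have h2 : b ≤ a * max 1 (b / a) := by
    have h3 : a * (b / a) = b := by field_simp
    nlinarith [mul_le_mul_of_nonneg_left (le_max_right 1 (b / a)) hpos.le]
  linarith

lemma aux_le {X u D : ℝ} (hD : 0 ≤ D) (H : ∀ ε : ℝ, 0 < ε → X < u + ε * D) : X ≤ u := by
  by_contra hlt
  push_neg at hlt
  have hε : 0 < (X - u) / (D + 1) := div_pos (by linarith) (by linarith)
  have h1 := H _ hε
  have h2 : (X - u) / (D + 1) * D < X - u := by
    rw [div_mul_eq_mul_div, div_lt_iff₀ (by linarith : (0:ℝ) < D + 1)]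
    nlinarith
  linarith


lemma DS_unif {k : ℕ} (hk : (k:ℝ) ≠ 0) : DS (fun (_ _ : Fin k) => 1/(k:ℝ)) := by
  refine ⟨fun s t => by positivity, fun s => ?_, fun t => ?_⟩ <;>
    · rw [Finset.sum_const, Finset.card_univ, Fintype.card_fin, nsmul_eq_mul]
      field_simp

lemma DS_permMat {k : ℕ} (π : Equiv.Perm (Fin k)) : DS (permMat π) := by
  refine ⟨fun s t => by unfold permMat; split <;> norm_num, fun s => ?_, fun t => ?_⟩
  · simp [permMat]
  · simp [permMat, Equiv.apply_eq_iff_eq_symm_apply]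

lemma ThR_permMat {n m k : ℕ} (h : Fin n → Fin k → ℝ) (v : Fin n → ℝ → ℝ)
    (c : Fin m → ℝ) (J : Fin n → Finset (Fin m))
    (π : Fin n → Equiv.Perm (Fin k)) (z : Fin n → Fin k → ℝ) (lam : Fin m → Fin k → ℝ) :
    ThR h v c J (fun i => permMat (π i)) z lam = ThS h v c J π z lam := by
  unfold ThR ThS
  congr 1
  refine Finset.sum_congr rfl fun j _ => Finset.sum_congr rfl fun l _ => ?_
  congr 1
  congr 1
  refine Finset.sum_congr rfl fun i _ => ?_
  simp [permMat, ite_mul]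

lemma ThR_div_k {n m k : ℕ} (hk : (k:ℝ) ≠ 0) (h : Fin n → Fin k → ℝ) (v : Fin n → ℝ → ℝ)
    (c : Fin m → ℝ) (J : Fin n → Finset (Fin m)) {M : Fin n → Fin k → Fin k → ℝ}
    (hM : ∀ i t, ∑ s, M i s t = 1) (z : Fin n → Fin k → ℝ) (lamb : Fin m → ℝ) :
    ThR h v c J M z (fun j _ => lamb j / k) = ThA h v c J z lamb := by
  unfold ThR ThA
  congr 1
  refine Finset.sum_congr rfl fun j _ => ?_
  have h2 : ∑ l, ∑ i ∈ univ.filter (fun i => j ∈ J i), ∑ t, M i l t * z i t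
      = ∑ i ∈ univ.filter (fun i => j ∈ J i), ∑ t, z i t := by
    rw [Finset.sum_comm]
    refine Finset.sum_congr rfl fun i _ => ?_
    rw [Finset.sum_comm]
    simp only [← Finset.sum_mul, hM i, one_mul]
  rw [← Finset.mul_sum, Finset.sum_sub_distrib, Finset.sum_const, Finset.card_univ,
    Fintype.card_fin, h2, nsmul_eq_mul, ← Finset.mul_sum]
  field_simp

lemma ThR_unif {n m k : ℕ} (h : Fin n → Fin k → ℝ) (v : Fin n → ℝ → ℝ)
    (c : Fin m → ℝ) (J : Fin n → Finset (Fin m))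
    (z : Fin n → Fin k → ℝ) (lam : Fin m → Fin k → ℝ) :
    ThR h v c J (fun _ _ _ => 1/(k:ℝ)) z lam = ThA h v c J z (fun j => ∑ l, lam j l) := by
  unfold ThR ThA
  congr 1
  refine Finset.sum_congr rfl fun j _ => ?_
  rw [Finset.sum_mul]
  refine Finset.sum_congr rfl fun l _ => ?_
  congr 2
  refine Finset.sum_congr rfl fun i _ => ?_
  rw [Finset.mul_sum]

lemma exists_shift {k : ℕ} (hk : 1 ≤ k) (b z : Fin k → ℝ) :
    ∃ σ : Equiv.Perm (Fin k), ∑ l, b l * z (σ l) ≤ 1/(k:ℝ) * ((∑ l, b l) * ∑ t, z t) := by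
  haveI : NeZero k := ⟨by omega⟩
  have hk' : (k:ℝ) ≠ 0 := Nat.cast_ne_zero.mpr (by omega)
  have hsum : ∑ s : Fin k, ∑ l, b l * z (l + s) = (∑ l, b l) * ∑ t, z t := by
    rw [Finset.sum_comm, Finset.sum_mul]
    refine Finset.sum_congr rfl fun l _ => ?_
    rw [← Finset.mul_sum]
    congr 1
    exact Fintype.sum_equiv (Equiv.addLeft l) _ _ (fun s => rfl)
  have havg : ∑ s : Fin k, ∑ l, b l * z (l + s)
      ≤ ∑ _s : Fin k, 1/(k:ℝ) * ((∑ l, b l) * ∑ t, z t) := by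
    rw [hsum, Finset.sum_const, Finset.card_univ, Fintype.card_fin, nsmul_eq_mul]
    rw [← mul_assoc, mul_one_div, div_self hk', one_mul]
  obtain ⟨s, -, hs⟩ := Finset.exists_le_of_sum_le Finset.univ_nonempty havg
  exact ⟨Equiv.addRight s, by simpa using hs⟩

lemma exists_perm_le {n m k : ℕ} (hk : 1 ≤ k) (h : Fin n → Fin k → ℝ) (v : Fin n → ℝ → ℝ)
    (c : Fin m → ℝ) (J : Fin n → Finset (Fin m))
    (z : Fin n → Fin k → ℝ) (lam : Fin m → Fin k → ℝ) :
    ∃ π : Fin n → Equiv.Perm (Fin k),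
      ThA h v c J z (fun j => ∑ l, lam j l) ≤ ThS h v c J π z lam := by
  have H : ∀ i : Fin n, ∃ σ : Equiv.Perm (Fin k),
      ∑ l, (∑ j ∈ univ.filter (fun j => j ∈ J i), lam j l) * z i (σ l)
        ≤ 1/(k:ℝ) * ((∑ l, ∑ j ∈ univ.filter (fun j => j ∈ J i), lam j l) * ∑ t, z i t) :=
    fun i => exists_shift hk _ _
  choose π hπ using H
  refine ⟨π, ?_⟩
  have hL : ∑ j, ∑ l, lam j l * ∑ i ∈ univ.filter (fun i => j ∈ J i), z i (π i l)
      = ∑ i, ∑ l, (∑ j ∈ univ.filter (fun j => j ∈ J i), lam j l) * z i (π i l) := by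
    calc ∑ j, ∑ l, lam j l * ∑ i ∈ univ.filter (fun i => j ∈ J i), z i (π i l)
        = ∑ j, ∑ i ∈ univ.filter (fun i => j ∈ J i), ∑ l, lam j l * z i (π i l) := by
          refine Finset.sum_congr rfl fun j _ => ?_
          simp only [Finset.mul_sum]
          exact Finset.sum_comm
      _ = ∑ i, ∑ j ∈ univ.filter (fun j => j ∈ J i), ∑ l, lam j l * z i (π i l) :=
          sum_filter_swap J _
      _ = ∑ i, ∑ l, (∑ j ∈ univ.filter (fun j => j ∈ J i), lam j l) * z i (π i l) := by
          refine Finset.sum_congr rfl fun i _ => ?_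
          rw [Finset.sum_comm]
          exact Finset.sum_congr rfl fun l _ => (Finset.sum_mul _ _ _).symm
  have hR : ∑ j, (∑ l, lam j l) * ∑ i ∈ univ.filter (fun i => j ∈ J i), (1/(k:ℝ)) * ∑ l, z i l
      = ∑ i, 1/(k:ℝ) * ((∑ l, ∑ j ∈ univ.filter (fun j => j ∈ J i), lam j l) * ∑ t, z i t) := by
    calc ∑ j, (∑ l, lam j l) * ∑ i ∈ univ.filter (fun i => j ∈ J i), (1/(k:ℝ)) * ∑ l, z i l
        = ∑ j, ∑ i ∈ univ.filter (fun i => j ∈ J i), (∑ l, lam j l) * ((1/(k:ℝ)) * ∑ l, z i l) := by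
          exact Finset.sum_congr rfl fun j _ => Finset.mul_sum _ _ _
      _ = ∑ i, ∑ j ∈ univ.filter (fun j => j ∈ J i), (∑ l, lam j l) * ((1/(k:ℝ)) * ∑ l, z i l) :=
          sum_filter_swap J _
      _ = ∑ i, 1/(k:ℝ) * ((∑ l, ∑ j ∈ univ.filter (fun j => j ∈ J i), lam j l) * ∑ t, z i t) := by
          refine Finset.sum_congr rfl fun i _ => ?_
          rw [← Finset.sum_mul, Finset.sum_comm]
          ring
  have key : ∑ j, ∑ l, lam j l * ∑ i ∈ univ.filter (fun i => j ∈ J i), z i (π i l)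
      ≤ ∑ j, (∑ l, lam j l) * ∑ i ∈ univ.filter (fun i => j ∈ J i), (1/(k:ℝ)) * ∑ l, z i l := by
    rw [hL, hR]
    exact Finset.sum_le_sum fun i _ => hπ i
  unfold ThA ThS
  have e1 : ∑ j, (∑ l, lam j l) * (c j - ∑ i ∈ univ.filter (fun i => j ∈ J i), (1/(k:ℝ)) * ∑ l, z i l)
      = (∑ j, ∑ l, lam j l * c j)
        - ∑ j, (∑ l, lam j l) * ∑ i ∈ univ.filter (fun i => j ∈ J i), (1/(k:ℝ)) * ∑ l, z i l := by
    rw [← Finset.sum_sub_distrib]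
    exact Finset.sum_congr rfl fun j _ => by rw [mul_sub, Finset.sum_mul]
  have e2 : ∑ j, ∑ l, lam j l * (c j - ∑ i ∈ univ.filter (fun i => j ∈ J i), z i (π i l))
      = (∑ j, ∑ l, lam j l * c j)
        - ∑ j, ∑ l, lam j l * ∑ i ∈ univ.filter (fun i => j ∈ J i), z i (π i l) := by
    rw [← Finset.sum_sub_distrib]
    refine Finset.sum_congr rfl fun j _ => ?_
    rw [← Finset.sum_sub_distrib]
    exact Finset.sum_congr rfl fun l _ => mul_sub _ _ _
  rw [e1, e2]
  linarith

lemma U_concave {n k : ℕ} (h : Fin n → Fin k → ℝ) (v : Fin n → ℝ → ℝ)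
    (hvcc : ∀ i, ConcaveOn ℝ (Set.Ici 0) (v i)) (hh : ∀ i l, 0 < h i l)
    {z1 z2 : Fin n → Fin k → ℝ} (h1 : ∀ i l, 0 ≤ z1 i l) (h2 : ∀ i l, 0 ≤ z2 i l)
    {a b : ℝ} (ha : 0 ≤ a) (hb : 0 ≤ b) (hab : a + b = 1) :
    a * U h v z1 + b * U h v z2 ≤ U h v (fun i l => a * z1 i l + b * z2 i l) := by
  unfold U
  rw [Finset.mul_sum, Finset.mul_sum, ← Finset.sum_add_distrib]
  refine Finset.sum_le_sum fun i _ => ?_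
  rw [Finset.mul_sum, Finset.mul_sum, ← Finset.sum_add_distrib]
  refine Finset.sum_le_sum fun l _ => ?_
  have hcv := (hvcc i).2 (Set.mem_Ici.mpr (h1 i l)) (Set.mem_Ici.mpr (h2 i l)) ha hb hab
  simp only [smul_eq_mul] at hcv
  have h3 := mul_le_mul_of_nonneg_left hcv (hh i l).le
  nlinarith [h3]

lemma strong_duality {n m k : ℕ} (hk : 1 ≤ k)
    (c : Fin m → ℝ) (hc : ∀ j, 0 < c j)
    (J : Fin n → Finset (Fin m))
    (hF : Bornology.IsBounded {x : Fin n → ℝ | (∀ i, 0 ≤ x i) ∧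
        ∀ j, ∑ i ∈ univ.filter (fun i => j ∈ J i), x i ≤ c j})
    (v : Fin n → ℝ → ℝ)
    (hvcc : ∀ i, ConcaveOn ℝ (Set.Ici 0) (v i))
    (hvm : ∀ i, StrictMonoOn (v i) (Set.Ici 0))
    (h : Fin n → Fin k → ℝ) (hh : ∀ i l, 0 < h i l) :
    ∃ (lamb : Fin m → ℝ) (W : ℝ), (∀ j, 0 ≤ lamb j) ∧
      (∀ z : Fin n → Fin k → ℝ, OrdAlloc z → ThA h v c J z lamb ≤ W) ∧
      (∀ r : ℝ, r < W → ∃ z : Fin n → Fin k → ℝ, OrdAlloc z ∧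
        (∀ j, gfun J z j ≤ c j) ∧ r < U h v z) := by
  have hkR : (0:ℝ) < (k:ℝ) := by exact_mod_cast hk
  set S : Set (Fin n → Fin k → ℝ) := {z | OrdAlloc z ∧ ∀ j, gfun J z j ≤ c j} with hSdef
  have h0S : (fun (_ : Fin n) (_ : Fin k) => (0:ℝ)) ∈ S := by
    refine ⟨ordAlloc_zero, fun j => ?_⟩
    simp [gfun, (hc j).le]
  -- bound on feasible allocations
  obtain ⟨R, hR⟩ := hF.exists_norm_le
  have hR0 : 0 ≤ R := le_trans (norm_nonneg _)
    (hR (fun _ => 0) ⟨fun i => le_rfl, fun j => by simpa using (hc j).le⟩)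
  have hzb : ∀ z ∈ S, ∀ i l, z i l ≤ (k:ℝ) * R := by
    intro z hz i l
    have hnn := ordAlloc_nonneg hz.1
    have hxF : (fun i => (1/(k:ℝ)) * ∑ l, z i l) ∈ {x : Fin n → ℝ | (∀ i, 0 ≤ x i) ∧
        ∀ j, ∑ i ∈ univ.filter (fun i => j ∈ J i), x i ≤ c j} :=
      ⟨fun i => mul_nonneg (by positivity) (Finset.sum_nonneg fun t _ => hnn i t),
       fun j => hz.2 j⟩
    have hxi : |(1/(k:ℝ)) * ∑ t, z i t| ≤ R := by
      have h4 := norm_le_pi_norm (fun i => (1/(k:ℝ)) * ∑ l, z i l) i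
      rw [Real.norm_eq_abs] at h4
      exact h4.trans (hR _ hxF)
    have h1 : z i l ≤ ∑ t, z i t := Finset.single_le_sum (fun t _ => hnn i t) (Finset.mem_univ l)
    have h5 : (1/(k:ℝ)) * ∑ t, z i t ≤ R := (le_abs_self _).trans hxi
    calc z i l ≤ ∑ t, z i t := h1
      _ = (k:ℝ) * ((1/(k:ℝ)) * ∑ t, z i t) := by field_simp
      _ ≤ (k:ℝ) * R := mul_le_mul_of_nonneg_left h5 hkR.le
  set T : Set ℝ := (fun z => U h v z) '' S with hTdef
  have hTne : T.Nonempty := ⟨_, ⟨_, h0S, rfl⟩⟩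
  have hTbdd : BddAbove T := by
    refine ⟨∑ i, ∑ l, h i l * v i ((k:ℝ)*R), ?_⟩
    rintro u ⟨z, hz, rfl⟩
    refine Finset.sum_le_sum fun i _ => Finset.sum_le_sum fun l _ => ?_
    refine mul_le_mul_of_nonneg_left ?_ (hh i l).le
    exact (hvm i).monotoneOn (Set.mem_Ici.mpr (ordAlloc_nonneg hz.1 i l))
      (Set.mem_Ici.mpr (by positivity)) (hzb z hz i l)
  set W := sSup T with hW
  have hWub : ∀ z ∈ S, U h v z ≤ W := fun z hz => le_csSup hTbdd ⟨z, hz, rfl⟩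
  -- separation
  set Bset : Set (ℝ × (Fin m → ℝ)) := (Set.Ioi W) ×ˢ (Set.univ.pi fun j => Set.Iio (c j))
    with hBdef
  set Aset : Set (ℝ × (Fin m → ℝ)) :=
    {p | ∃ z, OrdAlloc z ∧ p.1 ≤ U h v z ∧ ∀ j, gfun J z j ≤ p.2 j} with hAdef
  have hBopen : IsOpen Bset := isOpen_Ioi.prod (isOpen_set_pi Set.finite_univ fun j _ => isOpen_Iio)
  have hBconv : Convex ℝ Bset := (convex_Ioi W).prod (convex_pi fun j _ => convex_Iio (c j))
  have hgcomb : ∀ (z1 z2 : Fin n → Fin k → ℝ) (a b : ℝ) (j : Fin m),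
      gfun J (fun i l => a * z1 i l + b * z2 i l) j = a * gfun J z1 j + b * gfun J z2 j := by
    intro z1 z2 a b j
    unfold gfun
    rw [Finset.mul_sum, Finset.mul_sum, ← Finset.sum_add_distrib]
    refine Finset.sum_congr rfl fun i _ => ?_
    rw [Finset.sum_add_distrib, ← Finset.mul_sum, ← Finset.mul_sum]
    ring
  have hAconv : Convex ℝ Aset := by
    rintro p ⟨z1, hz1, hu1, hg1⟩ q ⟨z2, hz2, hu2, hg2⟩ a b ha hb hab
    refine ⟨fun i l => a * z1 i l + b * z2 i l, ?_, ?_, ?_⟩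
    · intro i l
      have e : nxt (fun l => a * z1 i l + b * z2 i l) l = a * nxt (z1 i) l + b * nxt (z2 i) l := by
        unfold nxt; split <;> simp
      rw [e]
      exact add_le_add (mul_le_mul_of_nonneg_left (hz1 i l) ha)
        (mul_le_mul_of_nonneg_left (hz2 i l) hb)
    · have hcc := U_concave h v hvcc hh (fun i l => ordAlloc_nonneg hz1 i l)
        (fun i l => ordAlloc_nonneg hz2 i l) ha hb hab
      have h5 : a * p.1 + b * q.1 ≤ a * U h v z1 + b * U h v z2 :=
        add_le_add (mul_le_mul_of_nonneg_left hu1 ha) (mul_le_mul_of_nonneg_left hu2 hb)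
      have h6 : (a • p + b • q).1 = a * p.1 + b * q.1 := rfl
      rw [h6]
      exact h5.trans hcc
    · intro j
      have h7 : (a • p + b • q).2 j = a * p.2 j + b * q.2 j := rfl
      rw [h7, hgcomb]
      exact add_le_add (mul_le_mul_of_nonneg_left (hg1 j) ha)
        (mul_le_mul_of_nonneg_left (hg2 j) hb)
  have hdisj : Disjoint Bset Aset := by
    rw [Set.disjoint_left]
    rintro p hpB ⟨z, hz, hu, hgz⟩
    obtain ⟨hp1, hp2⟩ := hpB
    have hzS : z ∈ S := ⟨hz, fun j => (hgz j).trans (le_of_lt (hp2 j (Set.mem_univ j)))⟩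
    have hWz : U h v z ≤ W := hWub z hzS
    have : W < p.1 := hp1
    linarith [hu]
  obtain ⟨f, u0, hfB, hfA⟩ := geometric_hahn_banach_open hBconv hBopen hAconv hdisj
  set μ := f (1, 0) with hμdef
  set lamv : Fin m → ℝ := fun j => f ((0, Pi.single j 1) : ℝ × (Fin m → ℝ)) with hlamvdef
  have hf : ∀ p : ℝ × (Fin m → ℝ), f p = μ * p.1 + ∑ j, lamv j * p.2 j := by
    intro p
    have hdecomp : p = p.1 • ((1:ℝ), (0 : Fin m → ℝ))
        + ∑ j, p.2 j • (((0:ℝ), Pi.single j (1:ℝ)) : ℝ × (Fin m → ℝ)) := by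
      refine Prod.ext ?_ ?_
      · simp [Prod.fst_sum]
      · funext x
        simp [Prod.snd_sum, Pi.single_apply, Finset.sum_ite_eq]
    calc f p = f (p.1 • ((1:ℝ), (0 : Fin m → ℝ))
        + ∑ j, p.2 j • (((0:ℝ), Pi.single j (1:ℝ)) : ℝ × (Fin m → ℝ))) := by rw [← hdecomp]
      _ = p.1 • f ((1:ℝ), (0 : Fin m → ℝ)) + ∑ j, p.2 j • f (((0:ℝ), Pi.single j (1:ℝ)) : ℝ × (Fin m → ℝ)) := by
          rw [map_add, map_smul, map_sum]
          simp only [map_smul]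
      _ = μ * p.1 + ∑ j, lamv j * p.2 j := by
          simp only [smul_eq_mul, hμdef, hlamvdef]
          rw [mul_comm]
          congr 1
          exact Finset.sum_congr rfl fun j _ => mul_comm _ _
  have hBpt : ∀ t : ℝ, 0 < t → ∀ d : Fin m → ℝ, (∀ j, 0 < d j) →
      μ * (W + t) + ∑ j, lamv j * (c j - d j) < u0 := by
    intro t ht d hd
    have hmem : ((W + t, fun j => c j - d j) : ℝ × (Fin m → ℝ)) ∈ Bset := by
      refine Set.mem_prod.mpr ⟨?_, ?_⟩
      · simp only [Set.mem_Ioi]; linarith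
      · refine Set.mem_univ_pi.mpr fun j => ?_
        simp only [Set.mem_Iio]
        have := hd j
        linarith
    have := hfB _ hmem
    rwa [hf] at this
  have hμ : μ ≤ 0 := by
    apply aux_nonpos (b := u0 - μ * W - ∑ j, lamv j * (c j - 1))
    intro t ht
    have h8 := hBpt t ht (fun _ => 1) (fun _ => one_pos)
    have e : μ * (W + t) = μ * W + μ * t := by ring
    linarith
  have hlamv : ∀ j, 0 ≤ lamv j := by
    intro j
    have h9 : -lamv j ≤ 0 := by
      apply aux_nonpos (b := u0 - μ * (W + 1) - ∑ j', lamv j' * (c j' - 1))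
      intro s hs
      have h8 := hBpt 1 one_pos (fun j' => 1 + (if j' = j then s else 0))
        (fun j' => by positivity)
      have e : ∑ j', lamv j' * (c j' - (1 + (if j' = j then s else 0)))
          = (∑ j', lamv j' * (c j' - 1)) - lamv j * s := by
        have hsplit : ∀ j' ∈ univ, lamv j' * (c j' - (1 + (if j' = j then s else 0)))
            = lamv j' * (c j' - 1) - (if j' = j then lamv j' * s else 0) := by
          intro j' _; split <;> ring
        rw [Finset.sum_congr rfl hsplit, Finset.sum_sub_distrib,
          Finset.sum_ite_eq' univ j (fun j' => lamv j' * s)]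
        simp
      rw [e] at h8
      linarith
    linarith
  have hWc : μ * W + ∑ j, lamv j * c j ≤ u0 := by
    apply aux_le (D := (∑ j, lamv j) - μ)
      (hD := by
        have : 0 ≤ ∑ j, lamv j := Finset.sum_nonneg fun j _ => hlamv j
        linarith)
    intro ε hε
    have h8 := hBpt ε hε (fun _ => ε) (fun _ => hε)
    have e : ∑ j, lamv j * (c j - ε) = (∑ j, lamv j * c j) - ε * ∑ j, lamv j := by
      rw [Finset.mul_sum, ← Finset.sum_sub_distrib]
      exact Finset.sum_congr rfl fun j _ => by ring
    rw [e] at h8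
    nlinarith
  have hAz : ∀ z : Fin n → Fin k → ℝ, OrdAlloc z →
      u0 ≤ μ * U h v z + ∑ j, lamv j * gfun J z j := by
    intro z hz
    have hmem : ((U h v z, fun j => gfun J z j) : ℝ × (Fin m → ℝ)) ∈ Aset :=
      ⟨z, hz, le_rfl, fun j => le_rfl⟩
    have := hfA _ hmem
    rwa [hf] at this
  have hμneg : μ < 0 := by
    rcases lt_or_eq_of_le hμ with hlt | heq
    · exact hlt
    exfalso
    have hg0 : ∀ jj, gfun J (fun (_ : Fin n) (_ : Fin k) => (0:ℝ)) jj = 0 := by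
      intro jj; simp [gfun]
    have h0A := hAz _ (ordAlloc_zero (n := n) (k := k))
    have hU0 : u0 ≤ μ * U h v (fun _ _ => (0:ℝ)) := by
      have : ∑ j, lamv j * gfun J (fun (_ : Fin n) (_ : Fin k) => (0:ℝ)) j = 0 := by
        simp [hg0]
      linarith [h0A]
    rw [heq] at hU0
    simp at hU0
    have hcle : ∑ j, lamv j * c j ≤ u0 := by
      have := hWc; rw [heq] at this; linarith
    have hterm : ∀ jj ∈ univ, 0 ≤ lamv jj * c jj := fun jj _ => mul_nonneg (hlamv jj) (hc jj).le
    have hsum0 : ∑ j, lamv j * c j = 0 :=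
      le_antisymm (hcle.trans hU0) (Finset.sum_nonneg hterm)
    have hjz : ∀ j, lamv j = 0 := by
      intro j
      have h10 := (Finset.sum_eq_zero_iff_of_nonneg hterm).mp hsum0 j (Finset.mem_univ j)
      rcases mul_eq_zero.mp h10 with h' | h'
      · exact h'
      · exact absurd h' (ne_of_gt (hc j))
    have hB1 := hBpt 1 one_pos (fun _ => 1) (fun _ => one_pos)
    rw [heq] at hB1
    simp [hjz] at hB1
    linarith
  set ν := -μ with hν
  have hν0 : 0 < ν := by simp only [hν]; linarith
  refine ⟨fun j => lamv j / ν, W, fun j => div_nonneg (hlamv j) hν0.le, ?_, ?_⟩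
  · intro z hz
    have hA' := hAz z hz
    have key : (∑ j, lamv j * c j) - ∑ j, lamv j * gfun J z j ≤ ν * (W - U h v z) := by
      have e1 : μ * U h v z = -(ν * U h v z) := by rw [hν]; ring
      have e2 : μ * W = -(ν * W) := by rw [hν]; ring
      rw [e1] at hA'
      rw [e2] at hWc
      linarith
    have expand : ThA h v c J z (fun j => lamv j / ν)
        = U h v z + ((∑ j, lamv j * c j) - ∑ j, lamv j * gfun J z j) / ν := by
      rw [ThA_eq]
      congr 1
      rw [eq_div_iff hν0.ne', Finset.sum_mul, ← Finset.sum_sub_distrib]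
      refine Finset.sum_congr rfl fun j _ => ?_
      field_simp
    rw [expand]
    calc U h v z + ((∑ j, lamv j * c j) - ∑ j, lamv j * gfun J z j) / ν
        ≤ U h v z + (ν * (W - U h v z)) / ν := by
          exact add_le_add le_rfl ((div_le_div_iff_of_pos_right hν0).mpr key)
      _ = W := by
          rw [mul_div_cancel_left₀ _ hν0.ne']
          ring
  · intro r hr
    obtain ⟨u, ⟨z, hzS, rfl⟩, hru⟩ := exists_lt_of_lt_csSup hTne hr
    exact ⟨z, hzS.1, hzS.2, hru⟩
/-- Primal system value `W_ps` (sup-inf). -/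
def Wps (n m k : ℕ) (h : Fin n → Fin k → ℝ) (v : Fin n → ℝ → ℝ)
    (c : Fin m → ℝ) (J : Fin n → Finset (Fin m)) : EReal :=
  ⨆ π : Fin n → Equiv.Perm (Fin k), ⨆ z : Fin n → Fin k → ℝ, ⨆ _ : OrdAlloc z,
    ⨅ lam : Fin m → Fin k → ℝ, ⨅ _ : ∀ j l, 0 ≤ lam j l, (ThS h v c J π z lam : EReal)

/-- Dual system value `W_ds` (inf-sup). -/
def Wds (n m k : ℕ) (h : Fin n → Fin k → ℝ) (v : Fin n → ℝ → ℝ)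
    (c : Fin m → ℝ) (J : Fin n → Finset (Fin m)) : EReal :=
  ⨅ lam : Fin m → Fin k → ℝ, ⨅ _ : ∀ j l, 0 ≤ lam j l,
    ⨆ π : Fin n → Equiv.Perm (Fin k), ⨆ z : Fin n → Fin k → ℝ, ⨆ _ : OrdAlloc z,
      (ThS h v c J π z lam : EReal)

/-- Relaxed primal value `W_pr` (sup-inf). -/
def Wpr (n m k : ℕ) (h : Fin n → Fin k → ℝ) (v : Fin n → ℝ → ℝ)
    (c : Fin m → ℝ) (J : Fin n → Finset (Fin m)) : EReal :=
  ⨆ M : Fin n → Fin k → Fin k → ℝ, ⨆ _ : ∀ i, DS (M i),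
    ⨆ z : Fin n → Fin k → ℝ, ⨆ _ : OrdAlloc z,
      ⨅ lam : Fin m → Fin k → ℝ, ⨅ _ : ∀ j l, 0 ≤ lam j l, (ThR h v c J M z lam : EReal)

/-- Relaxed dual value `W_dr` (inf-sup). -/
def Wdr (n m k : ℕ) (h : Fin n → Fin k → ℝ) (v : Fin n → ℝ → ℝ)
    (c : Fin m → ℝ) (J : Fin n → Finset (Fin m)) : EReal :=
  ⨅ lam : Fin m → Fin k → ℝ, ⨅ _ : ∀ j l, 0 ≤ lam j l,
    ⨆ M : Fin n → Fin k → Fin k → ℝ, ⨆ _ : ∀ i, DS (M i),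
      ⨆ z : Fin n → Fin k → ℝ, ⨆ _ : OrdAlloc z, (ThR h v c J M z lam : EReal)

/-- Average primal value `W_pa` (sup-inf). -/
def Wpa (n m k : ℕ) (h : Fin n → Fin k → ℝ) (v : Fin n → ℝ → ℝ)
    (c : Fin m → ℝ) (J : Fin n → Finset (Fin m)) : EReal :=
  ⨆ z : Fin n → Fin k → ℝ, ⨆ _ : OrdAlloc z,
    ⨅ lamb : Fin m → ℝ, ⨅ _ : ∀ j, 0 ≤ lamb j, (ThA h v c J z lamb : EReal)

/-- Average dual value `W_da` (inf-sup). -/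
def Wda (n m k : ℕ) (h : Fin n → Fin k → ℝ) (v : Fin n → ℝ → ℝ)
    (c : Fin m → ℝ) (J : Fin n → Finset (Fin m)) : EReal :=
  ⨅ lamb : Fin m → ℝ, ⨅ _ : ∀ j, 0 ≤ lamb j,
    ⨆ z : Fin n → Fin k → ℝ, ⨆ _ : OrdAlloc z, (ThA h v c J z lamb : EReal)

/-- The six optimal values satisfy
`W_ps ≤ W_pr = W_pa = W_da = W_dr = W_ds`. -/
theorem stmt8 (n m k : ℕ) (hk : 1 ≤ k)
    (c : Fin m → ℝ) (hc : ∀ j, 0 < c j)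
    (J : Fin n → Finset (Fin m)) (hJ : ∀ i, (J i).Nonempty)
    (hF : Bornology.IsBounded {x : Fin n → ℝ | (∀ i, 0 ≤ x i) ∧
        ∀ j, ∑ i ∈ univ.filter (fun i => j ∈ J i), x i ≤ c j})
    (v : Fin n → ℝ → ℝ)
    (hvc : ∀ i, ContinuousOn (v i) (Set.Ici 0))
    (hvd : ∀ i, DifferentiableOn ℝ (v i) (Set.Ici 0))
    (hvcc : ∀ i, ConcaveOn ℝ (Set.Ici 0) (v i))
    (hvm : ∀ i, StrictMonoOn (v i) (Set.Ici 0))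
    (hvnn : ∀ i, ∀ x ∈ Set.Ici (0 : ℝ), 0 ≤ v i x)
    (h : Fin n → Fin k → ℝ) (hh : ∀ i l, 0 < h i l) :
    Wps n m k h v c J ≤ Wpr n m k h v c J ∧
    Wpr n m k h v c J = Wpa n m k h v c J ∧
    Wpa n m k h v c J = Wda n m k h v c J ∧
    Wda n m k h v c J = Wdr n m k h v c J ∧
    Wdr n m k h v c J = Wds n m k h v c J := by
  have hk0 : (k:ℝ) ≠ 0 := Nat.cast_ne_zero.mpr (by omega)
  -- (a) Wps ≤ Wpr
  have hps_pr : Wps n m k h v c J ≤ Wpr n m k h v c J := by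
    refine iSup_le fun π => iSup_le fun z => iSup_le fun hz => ?_
    refine le_iSup_of_le (fun i => permMat (π i)) (le_iSup_of_le (fun i => DS_permMat (π i))
      (le_iSup_of_le z (le_iSup_of_le hz ?_)))
    exact le_of_eq (iInf_congr fun lam => iInf_congr fun _ => by rw [ThR_permMat])
  -- (b) Wpr ≤ Wpa
  have hpr_pa : Wpr n m k h v c J ≤ Wpa n m k h v c J := by
    refine iSup_le fun M => iSup_le fun hM => iSup_le fun z => iSup_le fun hz => ?_
    refine le_iSup_of_le z (le_iSup_of_le hz ?_)
    refine le_iInf fun lamb => le_iInf fun hlamb => ?_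
    refine iInf_le_of_le (fun j _ => lamb j / k) (iInf_le_of_le
      (fun j l => div_nonneg (hlamb j) (Nat.cast_nonneg k)) ?_)
    exact le_of_eq (by rw [ThR_div_k hk0 h v c J (fun i t => (hM i).2.2 t) z lamb])
  -- (c) Wpa ≤ Wpr
  have hpa_pr : Wpa n m k h v c J ≤ Wpr n m k h v c J := by
    refine iSup_le fun z => iSup_le fun hz => ?_
    refine le_iSup_of_le (fun _ _ _ => 1/(k:ℝ)) (le_iSup_of_le (fun i => DS_unif hk0)
      (le_iSup_of_le z (le_iSup_of_le hz ?_)))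
    refine le_iInf fun lam => le_iInf fun hlam => ?_
    refine iInf_le_of_le (fun j => ∑ l, lam j l) (iInf_le_of_le
      (fun j => Finset.sum_nonneg fun l _ => hlam j l) ?_)
    exact le_of_eq (by rw [ThR_unif h v c J z lam])
  -- (d) Wpa ≤ Wda
  have hpa_da : Wpa n m k h v c J ≤ Wda n m k h v c J := by
    refine le_iInf fun lamb => le_iInf fun hlamb => iSup_le fun z => iSup_le fun hz => ?_
    exact iInf_le_of_le lamb (iInf_le_of_le hlamb (le_iSup_of_le z (le_iSup_of_le hz le_rfl)))
  -- (e) Wda ≤ Wpa via strong duality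
  obtain ⟨lamb0, W, hlamb0, hThA_le, hW_wit⟩ :=
    strong_duality hk c hc J hF v hvcc hvm h hh
  have hU_le_ThA : ∀ (z : Fin n → Fin k → ℝ), (∀ j, gfun J z j ≤ c j) →
      ∀ (lamb : Fin m → ℝ), (∀ j, 0 ≤ lamb j) → U h v z ≤ ThA h v c J z lamb := by
    intro z hfeas lamb hlamb
    rw [ThA_eq]
    have : 0 ≤ ∑ j, lamb j * (c j - gfun J z j) :=
      Finset.sum_nonneg fun j _ => mul_nonneg (hlamb j) (sub_nonneg.mpr (hfeas j))
    linarith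
  have hUz_le_Wpa : ∀ (z : Fin n → Fin k → ℝ), OrdAlloc z → (∀ j, gfun J z j ≤ c j) →
      ((U h v z : ℝ) : EReal) ≤ Wpa n m k h v c J := by
    intro z hz hfeas
    refine le_iSup_of_le z (le_iSup_of_le hz ?_)
    refine le_iInf fun lamb => le_iInf fun hlamb => ?_
    exact EReal.coe_le_coe_iff.mpr (hU_le_ThA z hfeas lamb hlamb)
  have hda_pa : Wda n m k h v c J ≤ Wpa n m k h v c J := by
    have h1 : Wda n m k h v c J ≤ (W : EReal) := by
      refine le_trans (iInf_le_of_le lamb0 (iInf_le_of_le hlamb0 le_rfl)) ?_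
      refine iSup_le fun z => iSup_le fun hz => ?_
      exact EReal.coe_le_coe_iff.mpr (hThA_le z hz)
    refine h1.trans (le_of_forall_lt fun x hx => ?_)
    induction x using EReal.rec with
    | bot =>
      have h2 := hUz_le_Wpa (fun _ _ => 0) ordAlloc_zero (fun j => by simp [gfun, (hc j).le])
      exact lt_of_lt_of_le (EReal.bot_lt_coe _) h2
    | coe r =>
      obtain ⟨z, hz, hfeas, hrU⟩ := hW_wit r (by exact_mod_cast hx)
      exact lt_of_lt_of_le (EReal.coe_lt_coe_iff.mpr hrU) (hUz_le_Wpa z hz hfeas)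
    | top => exact absurd hx (by simp)
  -- (f) Wda ≤ Wdr
  have hda_dr : Wda n m k h v c J ≤ Wdr n m k h v c J := by
    refine le_iInf fun lam => le_iInf fun hlam => ?_
    refine le_trans (iInf_le_of_le (fun j => ∑ l, lam j l) (iInf_le_of_le
      (fun j => Finset.sum_nonneg fun l _ => hlam j l) le_rfl)) ?_
    refine iSup_le fun z => iSup_le fun hz => ?_
    refine le_iSup_of_le (fun _ _ _ => 1/(k:ℝ)) (le_iSup_of_le (fun i => DS_unif hk0)
      (le_iSup_of_le z (le_iSup_of_le hz ?_)))
    exact le_of_eq (by rw [ThR_unif h v c J z lam])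
  -- (g) Wdr ≤ Wda
  have hdr_da : Wdr n m k h v c J ≤ Wda n m k h v c J := by
    refine le_iInf fun lamb => le_iInf fun hlamb => ?_
    refine le_trans (iInf_le_of_le (fun j _ => lamb j / k) (iInf_le_of_le
      (fun j l => div_nonneg (hlamb j) (Nat.cast_nonneg k)) le_rfl)) ?_
    refine iSup_le fun M => iSup_le fun hM => iSup_le fun z => iSup_le fun hz => ?_
    refine le_iSup_of_le z (le_iSup_of_le hz ?_)
    exact le_of_eq (by rw [ThR_div_k hk0 h v c J (fun i t => (hM i).2.2 t) z lamb])
  -- (h) Wds ≤ Wdr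
  have hds_dr : Wds n m k h v c J ≤ Wdr n m k h v c J := by
    refine le_iInf fun lam => le_iInf fun hlam => ?_
    refine le_trans (iInf_le_of_le lam (iInf_le_of_le hlam le_rfl)) ?_
    refine iSup_le fun π => iSup_le fun z => iSup_le fun hz => ?_
    refine le_iSup_of_le (fun i => permMat (π i)) (le_iSup_of_le (fun i => DS_permMat (π i))
      (le_iSup_of_le z (le_iSup_of_le hz ?_)))
    exact le_of_eq (by rw [ThR_permMat])
  -- (i) Wda ≤ Wds
  have hda_ds : Wda n m k h v c J ≤ Wds n m k h v c J := by
    refine le_iInf fun lam => le_iInf fun hlam => ?_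
    refine le_trans (iInf_le_of_le (fun j => ∑ l, lam j l) (iInf_le_of_le
      (fun j => Finset.sum_nonneg fun l _ => hlam j l) le_rfl)) ?_
    refine iSup_le fun z => iSup_le fun hz => ?_
    obtain ⟨π, hπ⟩ := exists_perm_le hk h v c J z lam
    exact le_iSup_of_le π (le_iSup_of_le z (le_iSup_of_le hz (EReal.coe_le_coe_iff.mpr hπ)))
  exact ⟨hps_pr, le_antisymm hpr_pa hpa_pr, le_antisymm hpa_da hda_pa,
    le_antisymm hda_dr hdr_da, le_antisymm (hdr_da.trans hda_ds) hds_dr⟩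
end
end

section
/- The optimal value of the relaxed primal problem equals that of the average primal problem: W_pr = W_pa. -/
open Finset

noncomputable section

/-! For a fixed allocation `z`, the infimum of a Lagrangian over nonnegative multipliers is `U z`
when the constraints hold and `⊥` otherwise, so both values are suprema of `U` over feasible
allocations. A relaxed-feasible `z` is average-feasible: summing its `k` constraints over `l` and
using that the columns of `M i` sum to one gives `k` times the averaged constraint. Conversely the
uniform matrix with entries `1 / k` turns every relaxed constraint into the averaged one. -/

theorem iInf_add_sum_mul_of_nonneg {ι : Type*} [Fintype ι] (A : ℝ) (g : ι → ℝ) :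
    (⨅ lam : ι → ℝ, ⨅ _ : ∀ d, 0 ≤ lam d, ((A + ∑ d, lam d * g d : ℝ) : EReal))
      = if ∀ d, 0 ≤ g d then (A : EReal) else ⊥ := by
  classical
  split_ifs with hg
  · refine le_antisymm ?_ (le_iInf₂ fun lam hlam => ?_)
    · exact (iInf₂_le 0 fun _ => le_rfl).trans (by simp)
    · have : 0 ≤ ∑ d, lam d * g d := sum_nonneg fun d _ => mul_nonneg (hlam d) (hg d)
      exact_mod_cast le_add_of_nonneg_right this
  · push Not at hg
    obtain ⟨d₀, hd₀⟩ := hg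
    refine (EReal.eq_bot_iff_forall_lt _).mpr fun r => ?_
    set t := max 0 ((r - A - 1) / g d₀)
    have htg : t * g d₀ ≤ r - A - 1 := by
      calc t * g d₀ ≤ (r - A - 1) / g d₀ * g d₀ :=
            mul_le_mul_of_nonpos_right (le_max_right _ _) hd₀.le
        _ = r - A - 1 := div_mul_cancel₀ _ hd₀.ne
    set lam : ι → ℝ := Pi.single d₀ t
    have hsum : ∑ d, lam d * g d = t * g d₀ := by
      simp [lam, Pi.single_apply, ite_mul]
    have hpos : ∀ d, 0 ≤ lam d := fun d => by
      by_cases hd : d = d₀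
      · subst hd; simp [lam, t]
      · simp [lam, hd]
    refine (iInf₂_le _ hpos).trans_lt ?_
    rw [hsum]
    exact_mod_cast (by linarith : A + t * g d₀ < r)

theorem iInf_add_sum_sum_mul_of_nonneg {α β : Type*} [Fintype α] [Fintype β] (A : ℝ)
    (g : α → β → ℝ) :
    (⨅ lam : α → β → ℝ, ⨅ _ : ∀ a b, 0 ≤ lam a b,
        ((A + ∑ a, ∑ b, lam a b * g a b : ℝ) : EReal))
      = if ∀ a b, 0 ≤ g a b then (A : EReal) else ⊥ := by
  rw [← (Equiv.curry α β ℝ).iInf_comp]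
  simpa only [Equiv.curry_apply, Function.curry_apply, Function.uncurry_apply_pair,
    Prod.forall, Fintype.sum_prod_type] using iInf_add_sum_mul_of_nonneg A (Function.uncurry g)

section Lagrangians

variable {n m k : ℕ} (h : Fin n → Fin k → ℝ) (v : Fin n → ℝ → ℝ) (c : Fin m → ℝ)
  (J : Fin n → Finset (Fin m)) (z : Fin n → Fin k → ℝ)

theorem iInf_ThR (M : Fin n → Fin k → Fin k → ℝ) :
    (⨅ lam : Fin m → Fin k → ℝ, ⨅ _ : ∀ j l, 0 ≤ lam j l, (ThR h v c J M z lam : EReal))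
      = if ∀ j l, ∑ i ∈ univ.filter (fun i => j ∈ J i), ∑ t, M i l t * z i t ≤ c j
        then (U h v z : EReal) else ⊥ := by
  simpa only [ThR, sub_nonneg] using iInf_add_sum_sum_mul_of_nonneg (U h v z)
    fun j l => c j - ∑ i ∈ univ.filter (fun i => j ∈ J i), ∑ t, M i l t * z i t

theorem iInf_ThA :
    (⨅ lamb : Fin m → ℝ, ⨅ _ : ∀ j, 0 ≤ lamb j, (ThA h v c J z lamb : EReal))
      = if ∀ j, ∑ i ∈ univ.filter (fun i => j ∈ J i), (1 / (k : ℝ)) * ∑ l, z i l ≤ c j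
        then (U h v z : EReal) else ⊥ := by
  simpa only [ThA, sub_nonneg] using iInf_add_sum_mul_of_nonneg (U h v z)
    fun j => c j - ∑ i ∈ univ.filter (fun i => j ∈ J i), (1 / (k : ℝ)) * ∑ l, z i l

end Lagrangians

theorem sum_sum_mul_eq_sum_of_sum_col_eq_one {k : ℕ} {M : Fin k → Fin k → ℝ}
    (hM : ∀ t, ∑ s, M s t = 1) (x : Fin k → ℝ) :
    ∑ s, ∑ t, M s t * x t = ∑ t, x t := by
  rw [sum_comm]
  exact sum_congr rfl fun t _ => by rw [← sum_mul, hM t, one_mul]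

theorem DS.uniform {k : ℕ} (hk : k ≠ 0) : DS (fun _ _ : Fin k => 1 / (k : ℝ)) := by
  have hk' : (k : ℝ) ≠ 0 := Nat.cast_ne_zero.mpr hk
  refine ⟨fun _ _ => by positivity, fun _ => ?_, fun _ => ?_⟩ <;>
    simp [hk']

theorem sum_mean_le_of_forall_sum_mix_le {ι : Type*} {k : ℕ} (hk : k ≠ 0) (s : Finset ι)
    {M : ι → Fin k → Fin k → ℝ} (hM : ∀ i t, ∑ s, M i s t = 1) {z : ι → Fin k → ℝ} {C : ℝ}
    (H : ∀ l, ∑ i ∈ s, ∑ t, M i l t * z i t ≤ C) :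
    ∑ i ∈ s, (1 / (k : ℝ)) * ∑ l, z i l ≤ C := by
  have hk' : (0 : ℝ) < k := Nat.cast_pos.mpr (Nat.pos_of_ne_zero hk)
  have hsum : ∑ i ∈ s, ∑ l, z i l ≤ k * C := by
    calc ∑ i ∈ s, ∑ l, z i l = ∑ i ∈ s, ∑ l, ∑ t, M i l t * z i t :=
          sum_congr rfl fun i _ => (sum_sum_mul_eq_sum_of_sum_col_eq_one (hM i) _).symm
      _ = ∑ l : Fin k, ∑ i ∈ s, ∑ t, M i l t * z i t := sum_comm
      _ ≤ ∑ _l : Fin k, C := sum_le_sum fun l _ => H l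
      _ = k * C := by simp
  rw [← mul_sum, one_div, inv_mul_le_iff₀ hk']
  exact hsum

theorem stmt9_general (n m k : ℕ) (hk : 1 ≤ k)
    (c : Fin m → ℝ)
    (J : Fin n → Finset (Fin m))
    (v : Fin n → ℝ → ℝ)
    (h : Fin n → Fin k → ℝ) :
    Wpr n m k h v c J = Wpa n m k h v c J := by
  have hk0 : k ≠ 0 := Nat.one_le_iff_ne_zero.mp hk
  apply le_antisymm
  · refine iSup₂_le fun M hM => iSup₂_le fun z hz => le_iSup₂_of_le z hz ?_
    rw [iInf_ThR, iInf_ThA]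
    split_ifs with hR hA
    · exact le_rfl
    · exact absurd (fun j => sum_mean_le_of_forall_sum_mix_le hk0 _ (fun i => (hM i).2.2) (hR j)) hA
    · exact bot_le
    · exact le_rfl
  · refine iSup₂_le fun z hz => le_iSup₂_of_le _ (fun _ => DS.uniform hk0) <|
      le_iSup₂_of_le z hz (le_of_eq ?_)
    have : NeZero k := ⟨hk0⟩
    rw [iInf_ThR, iInf_ThA]
    simp only [← mul_sum, forall_const]

/-- The optimal value of the relaxed primal problem equals that of the
average primal problem: `W_pr = W_pa`. -/
theorem stmt9 (n m k : ℕ) (hk : 1 ≤ k)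
    (c : Fin m → ℝ) (hc : ∀ j, 0 < c j)
    (J : Fin n → Finset (Fin m)) (hJ : ∀ i, (J i).Nonempty)
    (hF : Bornology.IsBounded {x : Fin n → ℝ | (∀ i, 0 ≤ x i) ∧
        ∀ j, ∑ i ∈ univ.filter (fun i => j ∈ J i), x i ≤ c j})
    (v : Fin n → ℝ → ℝ)
    (hvc : ∀ i, ContinuousOn (v i) (Set.Ici 0))
    (hvd : ∀ i, DifferentiableOn ℝ (v i) (Set.Ici 0))
    (hvcc : ∀ i, ConcaveOn ℝ (Set.Ici 0) (v i))
    (hvm : ∀ i, StrictMonoOn (v i) (Set.Ici 0))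
    (hvnn : ∀ i, ∀ x ∈ Set.Ici (0 : ℝ), 0 ≤ v i x)
    (h : Fin n → Fin k → ℝ) (hh : ∀ i l, 0 < h i l) :
    Wpr n m k h v c J = Wpa n m k h v c J :=
  stmt9_general n m k hk c J v h
end
end

section
/- Strong duality holds for the average system problem: W_pa = W_da. -/
open Finset

noncomputable section

private lemma aux_cvx_lt {x y x' y' a b : ℝ} (h1 : x < y) (h2 : x' < y')
    (ha : 0 ≤ a) (hb : 0 ≤ b) (hab : a + b = 1) : a*x + b*x' < a*y + b*y' := by
  rcases eq_or_lt_of_le ha with ha' | ha'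
  · have hb1 : b = 1 := by linarith
    rw [← ha', hb1]; simpa using h2
  · nlinarith [mul_le_mul_of_nonneg_left h2.le hb]

private lemma aux_eps_le {A B K : ℝ} (H : ∀ ε : ℝ, 0 < ε → A + ε * K < B) : A ≤ B := by
  by_contra hlt
  push_neg at hlt
  set ε := (A - B) / (2 * (|K| + 1)) with hεd
  have hε : 0 < ε := by apply div_pos <;> [linarith; positivity]
  have h1 := H ε hε
  have key : ε * (|K| + 1) = (A - B) / 2 := by
    rw [hεd]; field_simp
  have h2 : ε * (-|K|) ≤ ε * K := mul_le_mul_of_nonneg_left (neg_abs_le K) hε.le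
  nlinarith

private lemma aux_ord_nonneg {k : ℕ} {z : Fin k → ℝ} (hz : ∀ l, nxt z l ≤ z l) (l : Fin k) :
    0 ≤ z l := by
  have H : ∀ t : ℕ, ∀ l : Fin k, k - (l : ℕ) ≤ t → 0 ≤ z l := by
    intro t
    induction t with
    | zero => intro l hl; have := l.isLt; omega
    | succ t ih =>
      intro l hl
      refine le_trans ?_ (hz l)
      unfold nxt
      split
      · exact ih _ (by simp; omega)
      · exact le_refl 0
  exact H k l (by omega)

private lemma aux_coe_sSup_le {S : Set ℝ} (hne : S.Nonempty) (W : EReal)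
    (h : ∀ s ∈ S, (s : EReal) ≤ W) : ((sSup S : ℝ) : EReal) ≤ W := by
  induction W using EReal.rec with
  | bot => obtain ⟨s, hs⟩ := hne; exact absurd (h s hs) (by simp)
  | coe r => exact EReal.coe_le_coe_iff.2 (csSup_le hne fun s hs => EReal.coe_le_coe_iff.1 (h s hs))
  | top => exact le_top

/-- Strong duality holds for the average system problem: `W_pa = W_da`. -/
theorem stmt10 (n m k : ℕ) (hk : 1 ≤ k)
    (c : Fin m → ℝ) (hc : ∀ j, 0 < c j)
    (J : Fin n → Finset (Fin m)) (hJ : ∀ i, (J i).Nonempty)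
    (hF : Bornology.IsBounded {x : Fin n → ℝ | (∀ i, 0 ≤ x i) ∧
        ∀ j, ∑ i ∈ univ.filter (fun i => j ∈ J i), x i ≤ c j})
    (v : Fin n → ℝ → ℝ)
    (hvc : ∀ i, ContinuousOn (v i) (Set.Ici 0))
    (hvd : ∀ i, DifferentiableOn ℝ (v i) (Set.Ici 0))
    (hvcc : ∀ i, ConcaveOn ℝ (Set.Ici 0) (v i))
    (hvm : ∀ i, StrictMonoOn (v i) (Set.Ici 0))
    (hvnn : ∀ i, ∀ x ∈ Set.Ici (0 : ℝ), 0 ≤ v i x)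
    (h : Fin n → Fin k → ℝ) (hh : ∀ i l, 0 < h i l) :
    Wpa n m k h v c J = Wda n m k h v c J := by

  classical
  have hk0 : (0:ℝ) < k := by exact_mod_cast hk
  set L : (Fin n → Fin k → ℝ) → Fin m → ℝ :=
    fun z j => ∑ i ∈ univ.filter (fun i => j ∈ J i), (1 / (k : ℝ)) * ∑ l, z i l with hL
  have hThA : ∀ z lamb, ThA h v c J z lamb = U h v z + ∑ j, lamb j * (c j - L z j) := by
    intro z lamb; simp only [ThA, hL]
  set g : (Fin n → Fin k → ℝ) → Fin m → ℝ := fun z j => L z j - c j with hg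
  -- the base point z = 0
  have hO0 : OrdAlloc (fun (_ : Fin n) (_ : Fin k) => (0:ℝ)) := by
    intro i l; unfold nxt; split <;> simp
  have hL0 : ∀ j, L (fun _ _ => (0:ℝ)) j = 0 := by intro j; simp [hL]
  have hg0 : ∀ j, g (fun _ _ => (0:ℝ)) j = - c j := by intro j; simp [hg, hL0]
  -- the primal value p
  set S : Set ℝ :=
    {r | ∃ z, OrdAlloc z ∧ (∀ j, L z j ≤ c j) ∧ U h v z = r} with hS
  have hSne : S.Nonempty :=
    ⟨U h v (fun _ _ => 0), ⟨_, hO0, fun j => by rw [hL0]; exact (hc j).le, rfl⟩⟩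
  -- boundedness
  obtain ⟨r0, hr0⟩ := hF.subset_closedBall 0
  set r := max r0 0 with hrdef
  have hr : {x : Fin n → ℝ | (∀ i, 0 ≤ x i) ∧
      ∀ j, ∑ i ∈ univ.filter (fun i => j ∈ J i), x i ≤ c j} ⊆ Metric.closedBall 0 r :=
    hr0.trans (Metric.closedBall_subset_closedBall (le_max_left _ _))
  have hrnn : (0:ℝ) ≤ r := le_max_right _ _
  have hzbound : ∀ z, OrdAlloc z → (∀ j, L z j ≤ c j) → ∀ i l, z i l ≤ k * r := by
    intro z hoz hfz i l
    have hznn : ∀ i l, 0 ≤ z i l := fun i l => aux_ord_nonneg (hoz i) l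
    have hx : (fun i => (1/(k:ℝ)) * ∑ l, z i l) ∈ {x : Fin n → ℝ | (∀ i, 0 ≤ x i) ∧
        ∀ j, ∑ i ∈ univ.filter (fun i => j ∈ J i), x i ≤ c j} := by
      constructor
      · intro i
        exact mul_nonneg (by positivity) (Finset.sum_nonneg fun l _ => hznn i l)
      · intro j; exact hfz j
    have hnorm : ‖(fun i => (1/(k:ℝ)) * ∑ l, z i l : Fin n → ℝ)‖ ≤ r :=
      mem_closedBall_zero_iff.1 (hr hx)
    have hxi : (1/(k:ℝ)) * ∑ l', z i l' ≤ r := by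
      have hni := norm_le_pi_norm (fun i => (1/(k:ℝ)) * ∑ l, z i l : Fin n → ℝ) i
      simp only [Real.norm_eq_abs] at hni
      exact le_trans (le_abs_self _) (le_trans hni hnorm)
    have hsum : ∑ l', z i l' ≤ k * r := by
      have h1 : (k:ℝ) * ((1/(k:ℝ)) * ∑ l', z i l') ≤ k * r :=
        mul_le_mul_of_nonneg_left hxi hk0.le
      have h2 : (k:ℝ) * ((1/(k:ℝ)) * ∑ l', z i l') = ∑ l', z i l' := by
        field_simp
      linarith
    exact le_trans (Finset.single_le_sum (fun l' _ => hznn i l') (mem_univ l)) hsum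
  have hSbdd : BddAbove S := by
    refine ⟨∑ i, ∑ l, h i l * v i (k*r), ?_⟩
    rintro s ⟨z, hoz, hfz, rfl⟩
    refine Finset.sum_le_sum fun i _ => Finset.sum_le_sum fun l _ => ?_
    have h1 : 0 ≤ z i l := aux_ord_nonneg (hoz i) l
    have h2 : z i l ≤ k*r := hzbound z hoz hfz i l
    have h3 : v i (z i l) ≤ v i (k*r) :=
      ((hvm i).monotoneOn) (Set.mem_Ici.2 h1) (Set.mem_Ici.2 (by positivity)) h2
    exact mul_le_mul_of_nonneg_left h3 (hh i l).le
  set p := sSup S with hp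
  -- the open convex set
  set C : Set ((Fin m → ℝ) × ℝ) :=
    ⋃ z ∈ {z : Fin n → Fin k → ℝ | OrdAlloc z},
      {q | (∀ j, g z j < q.1 j) ∧ q.2 < U h v z} with hC
  have hCopen : IsOpen C := by
    refine isOpen_biUnion fun z _ => ?_
    have he : {q : (Fin m → ℝ) × ℝ | (∀ j, g z j < q.1 j) ∧ q.2 < U h v z}
        = (⋂ j, {q : (Fin m → ℝ) × ℝ | g z j < q.1 j}) ∩ {q | q.2 < U h v z} := by
      ext q; simp [Set.mem_iInter]
    rw [he]
    exact IsOpen.inter (isOpen_iInter_of_finite fun j =>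
        isOpen_lt continuous_const ((continuous_apply j).comp continuous_fst))
      (isOpen_lt continuous_snd continuous_const)
  have hCconv : Convex ℝ C := by
    rintro q hq q' hq' a b ha hb hab
    simp only [hC, Set.mem_iUnion, Set.mem_setOf_eq] at hq hq' ⊢
    obtain ⟨z, hoz, hq1, hq2⟩ := hq
    obtain ⟨z', hoz', hq1', hq2'⟩ := hq'
    refine ⟨fun i l => a * z i l + b * z' i l, ?_, ?_, ?_⟩
    · intro i l
      show nxt (fun l => a * z i l + b * z' i l) l ≤ a * z i l + b * z' i l
      have hnx : nxt (fun l => a * z i l + b * z' i l) l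
          = a * nxt (z i) l + b * nxt (z' i) l := by
        unfold nxt; split <;> simp
      rw [hnx]
      exact add_le_add (mul_le_mul_of_nonneg_left (hoz i l) ha)
        (mul_le_mul_of_nonneg_left (hoz' i l) hb)
    · intro j
      have hLlin : L (fun i l => a*z i l + b*z' i l) j = a * L z j + b * L z' j := by
        simp only [hL]
        rw [Finset.mul_sum, Finset.mul_sum, ← Finset.sum_add_distrib]
        refine Finset.sum_congr rfl fun i _ => ?_
        rw [Finset.sum_add_distrib, ← Finset.mul_sum, ← Finset.mul_sum]
        ring
      have hgl : g (fun i l => a * z i l + b * z' i l) j = a * g z j + b * g z' j := by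
        simp only [hg]; rw [hLlin]; linear_combination (c j) * hab
      have hfst : (a • q + b • q').1 j = a * q.1 j + b * q'.1 j := rfl
      rw [hfst, hgl]
      exact aux_cvx_lt (hq1 j) (hq1' j) ha hb hab
    · have hU : a * U h v z + b * U h v z' ≤ U h v (fun i l => a * z i l + b * z' i l) := by
        simp only [U]
        rw [Finset.mul_sum, Finset.mul_sum, ← Finset.sum_add_distrib]
        refine Finset.sum_le_sum fun i _ => ?_
        rw [Finset.mul_sum, Finset.mul_sum, ← Finset.sum_add_distrib]
        refine Finset.sum_le_sum fun l _ => ?_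
        have hcc := (hvcc i).2 (Set.mem_Ici.2 (aux_ord_nonneg (hoz i) l))
          (Set.mem_Ici.2 (aux_ord_nonneg (hoz' i) l)) ha hb hab
        simp only [smul_eq_mul] at hcc
        calc a * (h i l * v i (z i l)) + b * (h i l * v i (z' i l))
            = h i l * (a * v i (z i l) + b * v i (z' i l)) := by ring
          _ ≤ h i l * v i (a * z i l + b * z' i l) :=
              mul_le_mul_of_nonneg_left hcc (hh i l).le
      have hsnd : (a • q + b • q').2 = a * q.2 + b * q'.2 := rfl
      rw [hsnd]
      exact lt_of_lt_of_le (aux_cvx_lt hq2 hq2' ha hb hab) hU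
  have hx0 : ((0 : Fin m → ℝ), p) ∉ C := by
    intro hmem
    simp only [hC, Set.mem_iUnion, Set.mem_setOf_eq] at hmem
    obtain ⟨z, hoz, h1, h2⟩ := hmem
    have hfz : ∀ j, L z j ≤ c j := by
      intro j; have := h1 j; simp only [hg, Pi.zero_apply] at this; linarith
    have : U h v z ≤ p := le_csSup hSbdd ⟨z, hoz, hfz, rfl⟩
    exact absurd h2 (not_lt.2 this)
  obtain ⟨f, hf⟩ := geometric_hahn_banach_open_point hCconv hCopen hx0
  set μ : Fin m → ℝ := fun j => f (Pi.single j 1, 0) with hμ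
  set ν : ℝ := f (0, 1) with hν
  have hfdec : ∀ (u : Fin m → ℝ) (t : ℝ), f (u, t) = (∑ j, u j * μ j) + t * ν := by
    intro u t
    have e1 : f (u, t) = f (u, 0) + f (0, t) := by
      rw [← map_add]
      congr 1
      apply Prod.ext <;> simp
    have e2 : f (0, t) = t * ν := by
      rw [hν, ← smul_eq_mul, ← map_smul]
      congr 1
      apply Prod.ext <;> simp
    have e3 : f (u, 0) = ∑ j, u j * μ j := by
      have hdecomp : ((u, (0:ℝ)) : (Fin m → ℝ) × ℝ)
          = ∑ j, (u j) • ((Pi.single j 1 : Fin m → ℝ), (0:ℝ)) := by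
        apply Prod.ext
        · rw [Prod.fst_sum]
          have : ∀ j, ((u j) • ((Pi.single j 1 : Fin m → ℝ), (0:ℝ))).1
              = Pi.single j (u j) := by
            intro j; funext x
            by_cases hx : x = j <;> simp [Pi.single_apply, hx]
          rw [Finset.sum_congr rfl fun j _ => this j]
          exact (Finset.univ_sum_single u).symm
        · rw [Prod.snd_sum]; simp
      rw [hdecomp, map_sum]
      refine Finset.sum_congr rfl fun j _ => ?_
      rw [map_smul, hμ, smul_eq_mul]
    rw [e1, e2, e3]
  have hmemC : ∀ (z : Fin n → Fin k → ℝ), OrdAlloc z → ∀ (u : Fin m → ℝ) (t : ℝ),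
      (∀ j, g z j < u j) → t < U h v z → (∑ j, u j * μ j) + t * ν < p * ν := by
    intro z hoz u t h1 h2
    have hmem : ((u, t) : (Fin m → ℝ) × ℝ) ∈ C := by
      simp only [hC, Set.mem_iUnion, Set.mem_setOf_eq]
      exact ⟨z, hoz, h1, h2⟩
    have := hf _ hmem
    rw [hfdec u t, hfdec 0 p] at this
    simpa using this
  have hμle : ∀ j, μ j ≤ 0 := by
    intro j
    by_contra hpos
    push_neg at hpos
    have H : ∀ s : ℝ, 0 < s →
        s * μ j + (U h v (fun _ _ => 0) - 1) * ν < p * ν := by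
      intro s hs
      have key := hmemC _ hO0 (fun j' => if j' = j then s else 0) (U h v (fun _ _ => 0) - 1)
        (fun j' => by
          show g (fun _ _ => 0) j' < if j' = j then s else 0
          rw [hg0]
          by_cases hj : j' = j
          · rw [if_pos hj]; linarith [hc j']
          · rw [if_neg hj]; linarith [hc j'])
        (by linarith)
      have hsum : ∑ j', (if j' = j then s else 0) * μ j' = s * μ j := by
        rw [Finset.sum_eq_single j]
        · rw [if_pos rfl]
        · intro j' _ hj'; rw [if_neg hj', zero_mul]
        · intro hj; exact absurd (mem_univ j) hj
      rwa [hsum] at key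
    have h1 := H 1 one_pos
    have hD0 : 0 < p * ν - (U h v (fun _ _ => 0) - 1) * ν := by linarith
    have h2 := H (2 * (p * ν - (U h v (fun _ _ => 0) - 1) * ν) / μ j)
      (div_pos (by linarith) hpos)
    have h3 : (2 * (p * ν - (U h v (fun _ _ => 0) - 1) * ν) / μ j) * μ j
        = 2 * (p * ν - (U h v (fun _ _ => 0) - 1) * ν) :=
      div_mul_cancel₀ _ (ne_of_gt hpos)
    rw [h3] at h2
    linarith
  have hνnn : 0 ≤ ν := by
    by_contra hneg
    push_neg at hneg
    have H : ∀ s : ℝ, 0 ≤ s → (U h v (fun _ _ => 0) - 1 - s) * ν < p * ν := by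
      intro s hs
      have key := hmemC _ hO0 0 (U h v (fun _ _ => 0) - 1 - s)
        (fun j => by rw [hg0]; simpa using hc j) (by linarith)
      simpa using key
    have h1 := H 0 le_rfl
    have hD0 : 0 < p * ν - (U h v (fun _ _ => 0) - 1) * ν := by nlinarith [h1]
    have h2 := H (2 * (p * ν - (U h v (fun _ _ => 0) - 1) * ν) / (-ν))
      (le_of_lt (div_pos (by linarith) (by linarith)))
    have h3 : (2 * (p * ν - (U h v (fun _ _ => 0) - 1) * ν) / (-ν)) * (-ν)
        = 2 * (p * ν - (U h v (fun _ _ => 0) - 1) * ν) :=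
      div_mul_cancel₀ _ (by linarith)
    nlinarith [h2, h3]
  have hkey : ∀ z, OrdAlloc z → (∑ j, g z j * μ j) + U h v z * ν ≤ p * ν := by
    intro z hoz
    apply aux_eps_le (K := (∑ j, μ j) - ν)
    intro ε hε
    have key := hmemC z hoz (fun j => g z j + ε) (U h v z - ε)
      (fun j => by show g z j < g z j + ε; linarith) (by linarith)
    calc (∑ j, g z j * μ j) + U h v z * ν + ε * ((∑ j, μ j) - ν)
        = (∑ j, (g z j + ε) * μ j) + (U h v z - ε) * ν := by
          rw [Finset.sum_congr rfl (fun j (_ : j ∈ univ) => add_mul (g z j) ε (μ j)),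
            Finset.sum_add_distrib, ← Finset.mul_sum]
          ring
      _ < p * ν := key
  have hνpos : 0 < ν := by
    rcases hνnn.lt_or_eq with h' | h'
    · exact h'
    · exfalso
      have hz0 := hkey _ hO0
      rw [← h'] at hz0
      have hsum : ∑ j, (- c j) * μ j ≤ 0 := by
        have : ∑ j, g (fun _ _ => (0:ℝ)) j * μ j = ∑ j, (- c j) * μ j :=
          Finset.sum_congr rfl fun j _ => by rw [hg0]
        rw [this] at hz0; linarith
      have hterm : ∀ j ∈ (univ : Finset (Fin m)), 0 ≤ (- c j) * μ j := fun j _ =>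
        by nlinarith [hc j, hμle j]
      have hall := (Finset.sum_eq_zero_iff_of_nonneg hterm).1
        (le_antisymm hsum (Finset.sum_nonneg hterm))
      have hμ0 : ∀ j, μ j = 0 := by
        intro j
        rcases mul_eq_zero.1 (hall j (mem_univ j)) with h'' | h''
        · exact absurd h'' (by simp; linarith [hc j])
        · exact h''
      have hw : (((0 : Fin m → ℝ), U h v (fun _ _ => 0) - 1) : (Fin m → ℝ) × ℝ) ∈ C := by
        simp only [hC, Set.mem_iUnion, Set.mem_setOf_eq]
        exact ⟨_, hO0, fun j => by rw [hg0]; simpa using hc j, by linarith⟩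
      have hlt := hf _ hw
      rw [hfdec, hfdec] at hlt
      simp [hμ0, ← h'] at hlt
  set lamb : Fin m → ℝ := fun j => - μ j / ν with hlamb
  have hlambnn : ∀ j, 0 ≤ lamb j := fun j =>
    div_nonneg (by linarith [hμle j]) hνpos.le
  have hfinal : ∀ z, OrdAlloc z → ThA h v c J z lamb ≤ p := by
    intro z hoz
    have hk2 := hkey z hoz
    have e1 : ThA h v c J z lamb = U h v z + ∑ j, (- μ j / ν) * (- g z j) := by
      rw [hThA]
      congr 1
      refine Finset.sum_congr rfl fun j _ => ?_
      have e : c j - L z j = - g z j := by simp [hg]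
      rw [e]
    have e2 : ∑ j, (- μ j / ν) * (- g z j) = (∑ j, g z j * μ j) / ν := by
      rw [Finset.sum_div]
      refine Finset.sum_congr rfl fun j _ => ?_
      field_simp
    rw [e1, e2]
    have h2 : (∑ j, g z j * μ j) / ν ≤ p - U h v z := by
      rw [div_le_iff₀ hνpos]
      nlinarith [hk2]
    linarith
  -- assembly
  have hweak : Wpa n m k h v c J ≤ Wda n m k h v c J := by
    rw [Wpa, Wda]
    refine le_iInf fun lamb' => le_iInf fun hl' => iSup_le fun z => iSup_le fun hz => ?_
    refine le_trans (iInf_le_of_le lamb' (iInf_le_of_le hl' le_rfl)) ?_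
    exact le_iSup_of_le z (le_iSup_of_le hz le_rfl)
  have hd : Wda n m k h v c J ≤ (p : EReal) := by
    rw [Wda]
    refine le_trans (iInf_le_of_le lamb (iInf_le_of_le hlambnn le_rfl)) ?_
    refine iSup_le fun z => iSup_le fun hz => ?_
    exact_mod_cast hfinal z hz
  have hpW : (p : EReal) ≤ Wpa n m k h v c J := by
    rw [hp]
    apply aux_coe_sSup_le hSne
    rintro s ⟨z, hoz, hfz, rfl⟩
    rw [Wpa]
    refine le_iSup_of_le z (le_iSup_of_le hoz ?_)
    refine le_iInf fun lamb' => le_iInf fun hl' => ?_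
    have huz : U h v z ≤ ThA h v c J z lamb' := by
      rw [hThA]
      have hnn : 0 ≤ ∑ j, lamb' j * (c j - L z j) :=
        Finset.sum_nonneg fun j _ => mul_nonneg (hl' j) (by linarith [hfz j])
      linarith
    exact_mod_cast huz
  exact le_antisymm hweak (hd.trans hpW)
end
end

section
/- The average dual value equals the relaxed dual value: W_da = W_dr. -/
open Finset

noncomputable section

lemma uniformDS {k : ℕ} (hk : 0 < k) : DS (fun _ _ : Fin k => 1 / (k : ℝ)) := by
  have hkR : (k : ℝ) ≠ 0 := Nat.cast_ne_zero.2 hk.ne'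
  refine ⟨fun _ _ => by positivity, fun s => ?_, fun t => ?_⟩ <;>
    simp [Finset.sum_const, Finset.card_univ, mul_one_div, div_self hkR, mul_inv_cancel₀ hkR]

lemma thR_uniform {n m k : ℕ} (hk : 0 < k) (h : Fin n → Fin k → ℝ) (v : Fin n → ℝ → ℝ)
    (c : Fin m → ℝ) (J : Fin n → Finset (Fin m)) (z : Fin n → Fin k → ℝ)
    (lam : Fin m → Fin k → ℝ) :
    ThR h v c J (fun _ _ _ => 1 / (k : ℝ)) z lam
      = ThA h v c J z (fun j => ∑ l, lam j l) := by
  unfold ThR ThA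
  congr 1
  refine Finset.sum_congr rfl fun j _ => ?_
  rw [Finset.sum_mul]
  refine Finset.sum_congr rfl fun l _ => ?_
  congr 2
  refine Finset.sum_congr rfl fun i _ => ?_
  rw [Finset.mul_sum]

lemma thR_const {n m k : ℕ} (hk : 0 < k) (h : Fin n → Fin k → ℝ) (v : Fin n → ℝ → ℝ)
    (c : Fin m → ℝ) (J : Fin n → Finset (Fin m)) (M : Fin n → Fin k → Fin k → ℝ)
    (hM : ∀ i, DS (M i)) (z : Fin n → Fin k → ℝ) (lamb : Fin m → ℝ) :
    ThR h v c J M z (fun j _ => lamb j / (k : ℝ)) = ThA h v c J z lamb := by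
  have hkR : (k : ℝ) ≠ 0 := Nat.cast_ne_zero.2 hk.ne'
  unfold ThR ThA
  congr 1
  refine Finset.sum_congr rfl fun j _ => ?_
  rw [← Finset.mul_sum]
  have key : (∑ l : Fin k, (c j - ∑ i ∈ univ.filter (fun i => j ∈ J i), ∑ t, M i l t * z i t))
      = (k : ℝ) * c j - ∑ i ∈ univ.filter (fun i => j ∈ J i), ∑ t, z i t := by
    rw [Finset.sum_sub_distrib, Finset.sum_const, Finset.card_univ, Fintype.card_fin,
      nsmul_eq_mul]
    congr 1
    rw [Finset.sum_comm]
    refine Finset.sum_congr rfl fun i _ => ?_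
    rw [Finset.sum_comm]
    refine Finset.sum_congr rfl fun t _ => ?_
    rw [← Finset.sum_mul, (hM i).2.2 t, one_mul]
  rw [key]
  have : (∑ i ∈ univ.filter (fun i => j ∈ J i), (1 / (k : ℝ)) * ∑ l, z i l)
      = (1 / (k : ℝ)) * ∑ i ∈ univ.filter (fun i => j ∈ J i), ∑ l, z i l := by
    rw [Finset.mul_sum]
  rw [this]
  field_simp

/-- The average dual value equals the relaxed dual value: `W_da = W_dr`. -/
theorem stmt11 (n m k : ℕ) (hk : 1 ≤ k)
    (c : Fin m → ℝ) (hc : ∀ j, 0 < c j)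
    (J : Fin n → Finset (Fin m)) (hJ : ∀ i, (J i).Nonempty)
    (hF : Bornology.IsBounded {x : Fin n → ℝ | (∀ i, 0 ≤ x i) ∧
        ∀ j, ∑ i ∈ univ.filter (fun i => j ∈ J i), x i ≤ c j})
    (v : Fin n → ℝ → ℝ)
    (hvc : ∀ i, ContinuousOn (v i) (Set.Ici 0))
    (hvd : ∀ i, DifferentiableOn ℝ (v i) (Set.Ici 0))
    (hvcc : ∀ i, ConcaveOn ℝ (Set.Ici 0) (v i))
    (hvm : ∀ i, StrictMonoOn (v i) (Set.Ici 0))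
    (hvnn : ∀ i, ∀ x ∈ Set.Ici (0 : ℝ), 0 ≤ v i x)
    (h : Fin n → Fin k → ℝ) (hh : ∀ i l, 0 < h i l) :
    Wda n m k h v c J = Wdr n m k h v c J := by
  have hk0 : 0 < k := hk
  apply le_antisymm
  · -- Wda ≤ Wdr
    refine le_iInf fun lam => le_iInf fun hlam => ?_
    have step1 : Wda n m k h v c J
        ≤ ⨆ z : Fin n → Fin k → ℝ, ⨆ _ : OrdAlloc z,
            (ThA h v c J z (fun j => ∑ l, lam j l) : EReal) :=
      iInf₂_le (fun j => ∑ l, lam j l)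
        (fun j => Finset.sum_nonneg fun l _ => hlam j l)
    refine step1.trans (iSup₂_le fun z hz => ?_)
    have heq : ThA h v c J z (fun j => ∑ l, lam j l)
        = ThR h v c J (fun _ _ _ => 1 / (k : ℝ)) z lam :=
      (thR_uniform hk0 h v c J z lam).symm
    rw [heq]
    exact le_iSup₂_of_le (fun _ => fun _ _ => 1 / (k : ℝ)) (fun _ => uniformDS hk0)
      (le_iSup₂ (f := fun z (_ : OrdAlloc z) =>
        ((ThR h v c J (fun _ _ _ => 1 / (k : ℝ)) z lam : ℝ) : EReal)) z hz)
  · -- Wdr ≤ Wda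
    refine le_iInf fun lamb => le_iInf fun hlamb => ?_
    have step1 : Wdr n m k h v c J
        ≤ ⨆ M : Fin n → Fin k → Fin k → ℝ, ⨆ _ : ∀ i, DS (M i),
            ⨆ z : Fin n → Fin k → ℝ, ⨆ _ : OrdAlloc z,
              (ThR h v c J M z (fun j _ => lamb j / (k : ℝ)) : EReal) :=
      iInf₂_le (fun j _ => lamb j / (k : ℝ))
        (fun j l => div_nonneg (hlamb j) (Nat.cast_nonneg k))
    refine step1.trans (iSup₂_le fun M hM => iSup₂_le fun z hz => ?_)
    rw [thR_const hk0 h v c J M hM z lamb]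
    exact le_iSup₂ (f := fun z (_ : OrdAlloc z) =>
      ((ThA h v c J z lamb : ℝ) : EReal)) z hz
end
end

section
/- Let c_1, …, c_n be positive integers and set T := (1 − ε) Σ_{i=1}^n c_i with ε = 1/10. Consider the system problem with k = 2, n players, value functions v_i(x) = x, decision weights h_i(1) = 1 − ε and h_i(2) = ε for all i, and feasibility constraints: for each outcome l ∈ {1,2}, the allocation profile y(l) must satisfy y_i(l) ≤ c_i for all i ∈ [n] and Σ_{i=1}^n y_i(l) ≤ (Σ_{i=1}^n c_i)/2. Let W_ps denote the optimal value of this system problem (the supremum over permutation profiles π ∈ (S_2)^n and ordered allocations z with z_i(1) ≥ z_i(2) ≥ 0 satisfying the constraints, of Σ_i [h_i(1) v_i(z_i(1)) + h_i(2) v_i(z_i(2))]). Then W_ps ≥ T if and only if there exists a subset S ⊆ [n] with Σ_{i∈S} c_i = Σ_{i∉S} c_i. -/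
/-!
In a feasible profile, let `S` be the set of players whose larger allocation `z i 0` goes to
outcome `0`. Then `∑ i, z i 0` is at most `min (c S) (C/2) + min (c Sᶜ) (C/2)`, where
`C = ∑ i, c i`, and the two outcome constraints give `∑ i, (z i 0 + z i 1) ≤ C`. Hence the welfare
`(1 - ε) ∑ z i 0 + ε ∑ z i 1` is at most `(1 - 2ε) (min (c S) (C/2) + min (c Sᶜ) (C/2)) + ε C`.
For integer capacities with `c S ≠ c Sᶜ` the two minima lose at least `1/2`, so the supremum
stays `(1 - 2ε)/2` below `(1 - ε) C`. Conversely a partition `S` attains `(1 - ε) C`: every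
player gets its full capacity in the outcome of its side of the partition and nothing in the
other.
-/

open Finset

theorem Equiv.Perm.fin_two_apply_one_eq_zero_iff (e : Equiv.Perm (Fin 2)) :
    e 1 = 0 ↔ e 0 ≠ 0 := by
  revert e; decide

theorem Finset.sum_sum_perm_apply {ι κ M : Type*} [Fintype ι] [Fintype κ] [AddCommMonoid M]
    (π : ι → Equiv.Perm κ) (z : ι → κ → M) :
    ∑ l, ∑ i, z i (π i l) = ∑ i, ∑ l, z i l := by
  rw [Finset.sum_comm]
  exact sum_congr rfl fun i _ => Equiv.sum_comp (π i) (z i)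

namespace SystemProblem

variable {ι : Type*} [Fintype ι]

/-- Player `i` receives `z i (π i l)` in outcome `l`; `z i 0 ≥ z i 1` are its two shares. -/
structure IsFeasible (c : ι → ℝ) (π : ι → Equiv.Perm (Fin 2)) (z : ι → Fin 2 → ℝ) : Prop where
  antitone : ∀ i, z i 1 ≤ z i 0
  nonneg : ∀ i, 0 ≤ z i 1
  le_cap : ∀ i l, z i (π i l) ≤ c i
  sum_le_half : ∀ l, ∑ i, z i (π i l) ≤ (∑ i, c i) / 2

def welfare (ε : ℝ) (z : ι → Fin 2 → ℝ) : ℝ :=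
  ∑ i, ((1 - ε) * z i 0 + ε * z i 1)

def feasibleWelfare (ε : ℝ) (c : ι → ℝ) : Set ℝ :=
  {W | ∃ π z, IsFeasible c π z ∧ W = welfare ε z}

namespace IsFeasible

variable {c : ι → ℝ} {π : ι → Equiv.Perm (Fin 2)} {z : ι → Fin 2 → ℝ}

theorem apply_zero_le (h : IsFeasible c π z) (i : ι) : z i 0 ≤ c i := by
  simpa using h.le_cap i ((π i).symm 0)

theorem sum_add_sum_le (h : IsFeasible c π z) : ∑ i, z i 0 + ∑ i, z i 1 ≤ ∑ i, c i := by
  have hsum := sum_sum_perm_apply π z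
  simp only [Fin.sum_univ_two] at hsum
  rw [← sum_add_distrib, ← hsum]
  linarith [h.sum_le_half 0, h.sum_le_half 1]

theorem sum_filter_apply_zero_le (h : IsFeasible c π z) (l : Fin 2) :
    ∑ i ∈ univ.filter (π · l = 0), z i 0 ≤ ∑ i, z i (π i l) :=
  calc ∑ i ∈ univ.filter (π · l = 0), z i 0
      = ∑ i ∈ univ.filter (π · l = 0), z i (π i l) :=
        sum_congr rfl fun i hi => by rw [(mem_filter.1 hi).2]
    _ ≤ ∑ i, z i (π i l) :=
        sum_le_sum_of_subset_of_nonneg (filter_subset _ _) fun i _ hi => by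
          rw [Fin.eq_one_of_ne_zero (π i l) (by simpa using hi)]
          exact h.nonneg i

theorem exists_sum_apply_zero_le [DecidableEq ι] (h : IsFeasible c π z) :
    ∃ S : Finset ι, ∑ i, z i 0 ≤
      min (∑ i ∈ S, c i) ((∑ i, c i) / 2) + min (∑ i ∈ Sᶜ, c i) ((∑ i, c i) / 2) := by
  set S := univ.filter (π · 0 = 0)
  have hSc : Sᶜ = univ.filter (π · 1 = 0) := by
    ext i
    simp [S, Equiv.Perm.fin_two_apply_one_eq_zero_iff]
  have hbound : ∀ l, ∑ i ∈ univ.filter (π · l = 0), z i 0 ≤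
      min (∑ i ∈ univ.filter (π · l = 0), c i) ((∑ i, c i) / 2) := fun l =>
    le_min (sum_le_sum fun i _ => h.apply_zero_le i)
      ((h.sum_filter_apply_zero_le l).trans (h.sum_le_half l))
  refine ⟨S, ?_⟩
  rw [← sum_add_sum_compl S, hSc]
  exact add_le_add (hbound 0) (hbound 1)

theorem exists_welfare_le [DecidableEq ι] (h : IsFeasible c π z) {ε : ℝ} (hε₀ : 0 ≤ ε)
    (hε : ε ≤ 1 / 2) :
    ∃ S : Finset ι, welfare ε z ≤ (1 - 2 * ε) *
      (min (∑ i ∈ S, c i) ((∑ i, c i) / 2) + min (∑ i ∈ Sᶜ, c i) ((∑ i, c i) / 2)) +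
        ε * ∑ i, c i := by
  obtain ⟨S, hS⟩ := h.exists_sum_apply_zero_le
  refine ⟨S, ?_⟩
  have htotal := mul_le_mul_of_nonneg_left h.sum_add_sum_le hε₀
  have htop := mul_le_mul_of_nonneg_left hS (by linarith : 0 ≤ 1 - 2 * ε)
  rw [welfare, sum_add_distrib, ← mul_sum, ← mul_sum]
  linarith

end IsFeasible

theorem min_add_min_le_of_ne {a b : ℕ} (hab : a ≠ b) :
    min (a : ℝ) ((a + b) / 2) + min (b : ℝ) ((a + b) / 2) ≤ a + b - 1 / 2 := by
  rcases hab.lt_or_gt with h | h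
  · have : (a : ℝ) + 1 ≤ b := by exact_mod_cast h
    linarith [min_le_left (a : ℝ) ((a + b) / 2), min_le_right (b : ℝ) ((a + b) / 2)]
  · have : (b : ℝ) + 1 ≤ a := by exact_mod_cast h
    linarith [min_le_right (a : ℝ) ((a + b) / 2), min_le_left (b : ℝ) ((a + b) / 2)]

variable {ε : ℝ}

theorem le_of_mem_feasibleWelfare [DecidableEq ι] {c : ι → ℝ} {W : ℝ} (hε₀ : 0 ≤ ε)
    (hε : ε ≤ 1 / 2) (hW : W ∈ feasibleWelfare ε c) : W ≤ (1 - ε) * ∑ i, c i := by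
  obtain ⟨π, z, hz, rfl⟩ := hW
  obtain ⟨S, hS⟩ := hz.exists_welfare_le hε₀ hε
  have hmin := add_le_add (min_le_right (∑ i ∈ S, c i) ((∑ i, c i) / 2))
    (min_le_right (∑ i ∈ Sᶜ, c i) ((∑ i, c i) / 2))
  have := mul_le_mul_of_nonneg_left hmin (by linarith : 0 ≤ 1 - 2 * ε)
  linarith

theorem le_of_mem_feasibleWelfare_of_forall_sum_ne [DecidableEq ι] {c : ι → ℕ} {W : ℝ}
    (hε₀ : 0 ≤ ε) (hε : ε ≤ 1 / 2) (hno : ∀ S : Finset ι, ∑ i ∈ S, c i ≠ ∑ i ∈ Sᶜ, c i)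
    (hW : W ∈ feasibleWelfare ε fun i => (c i : ℝ)) :
    W ≤ (1 - ε) * ∑ i, (c i : ℝ) - (1 - 2 * ε) / 2 := by
  obtain ⟨π, z, hz, rfl⟩ := hW
  obtain ⟨S, hS⟩ := hz.exists_welfare_le hε₀ hε
  have hgap := min_add_min_le_of_ne (hno S)
  rw [← Nat.cast_add, sum_add_sum_compl] at hgap
  push_cast at hgap
  have := mul_le_mul_of_nonneg_left hgap (by linarith : 0 ≤ 1 - 2 * ε)
  linarith

theorem zero_mem_feasibleWelfare {c : ι → ℝ} (hc : ∀ i, 0 ≤ c i) : 0 ∈ feasibleWelfare ε c :=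
  ⟨1, 0, ⟨fun _ => le_rfl, fun _ => le_rfl, fun i _ => hc i,
    fun _ => by simpa using div_nonneg (sum_nonneg fun i _ => hc i) zero_le_two⟩, by simp [welfare]⟩

theorem mem_feasibleWelfare_of_sum_eq [DecidableEq ι] {c : ι → ℝ} (hc : ∀ i, 0 ≤ c i)
    {S : Finset ι} (hS : ∑ i ∈ S, c i = ∑ i ∈ Sᶜ, c i) :
    (1 - ε) * ∑ i, c i ∈ feasibleWelfare ε c := by
  refine ⟨fun i => if i ∈ S then 1 else Equiv.swap 0 1, fun i j => if j = 0 then c i else 0,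
    ⟨fun i => by simpa using hc i, fun _ => by simp, fun i l => ?_, fun l => ?_⟩, ?_⟩
  · split_ifs <;> simp [hc i]
  · have hC := sum_add_sum_compl S c
    fin_cases l
    · simp [apply_ite (fun e : Equiv.Perm (Fin 2) => e 0), apply_ite (· = (0 : Fin 2)),
        sum_ite_mem]
      linarith
    · simp [apply_ite (fun e : Equiv.Perm (Fin 2) => e 1), apply_ite (· = (0 : Fin 2)),
        sum_ite, filter_not]
      linarith
  · simp [welfare, mul_sum]

theorem le_sSup_feasibleWelfare_iff [DecidableEq ι] (c : ι → ℕ) (hε₀ : 0 ≤ ε)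
    (hε : ε < 1 / 2) :
    (1 - ε) * ∑ i, (c i : ℝ) ≤ sSup (feasibleWelfare ε fun i => (c i : ℝ)) ↔
      ∃ S : Finset ι, ∑ i ∈ S, c i = ∑ i ∈ Sᶜ, c i := by
  constructor
  · intro hle
    by_contra! hno
    have hsup := csSup_le ⟨0, zero_mem_feasibleWelfare fun i => (c i).cast_nonneg⟩
      fun W hW => le_of_mem_feasibleWelfare_of_forall_sum_ne hε₀ hε.le hno hW
    linarith
  · rintro ⟨S, hS⟩
    exact le_csSup ⟨_, fun W hW => le_of_mem_feasibleWelfare hε₀ hε.le hW⟩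
      (mem_feasibleWelfare_of_sum_eq (fun i => (c i).cast_nonneg) (by exact_mod_cast hS))

end SystemProblem

theorem stmt14_general (n : ℕ) (c : Fin n → ℕ) :
    (1 - (1 / 10 : ℝ)) * ∑ i, (c i : ℝ) ≤
      sSup {W : ℝ | ∃ (π : Fin n → Equiv.Perm (Fin 2)) (z : Fin n → Fin 2 → ℝ),
        (∀ i, z i 1 ≤ z i 0) ∧ (∀ i, 0 ≤ z i 1) ∧
        (∀ i, ∀ l : Fin 2, z i (π i l) ≤ (c i : ℝ)) ∧
        (∀ l : Fin 2, ∑ i, z i (π i l) ≤ (∑ i, (c i : ℝ)) / 2) ∧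
        W = ∑ i, ((1 - (1 / 10 : ℝ)) * z i 0 + (1 / 10 : ℝ) * z i 1)}
    ↔ ∃ S : Finset (Fin n), ∑ i ∈ S, c i = ∑ i ∈ Sᶜ, c i := by
  convert SystemProblem.le_sSup_feasibleWelfare_iff (ε := 1 / 10) c (by norm_num) (by norm_num)
    using 4
  ext W
  exact ⟨fun ⟨π, z, h₁, h₂, h₃, h₄, hW⟩ => ⟨π, z, ⟨h₁, h₂, h₃, h₄⟩, hW⟩,
    fun ⟨π, z, ⟨h₁, h₂, h₃, h₄⟩, hW⟩ => ⟨π, z, h₁, h₂, h₃, h₄, hW⟩⟩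

/-- (NP-hardness gadget.) With `k = 2`, linear value functions,
weights `h i = (1 - ε, ε)` with `ε = 1/10`, and feasibility constraints
`y i ≤ c i` and `∑ i, y i ≤ (∑ i, c i)/2` for each outcome, the optimal value `W_ps`
of the system problem satisfies `W_ps ≥ T := (1 - ε) ∑ i, c i` if and only if an
integer partition of `(c i)` exists. -/
theorem stmt14 (n : ℕ) (c : Fin n → ℕ) (hc : ∀ i, 0 < c i) :
    (1 - (1 / 10 : ℝ)) * ∑ i, (c i : ℝ) ≤
      sSup {W : ℝ | ∃ (π : Fin n → Equiv.Perm (Fin 2)) (z : Fin n → Fin 2 → ℝ),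
        (∀ i, z i 1 ≤ z i 0) ∧ (∀ i, 0 ≤ z i 1) ∧
        (∀ i, ∀ l : Fin 2, z i (π i l) ≤ (c i : ℝ)) ∧
        (∀ l : Fin 2, ∑ i, z i (π i l) ≤ (∑ i, (c i : ℝ)) / 2) ∧
        W = ∑ i, ((1 - (1 / 10 : ℝ)) * z i 0 + (1 / 10 : ℝ) * z i 1)}
    ↔ ∃ S : Finset (Fin n), ∑ i ∈ S, c i = ∑ i ∈ Sᶜ, c i :=
  stmt14_general n c
end

section
/- Let v : ℝ_+ → ℝ_+ be continuous, differentiable, concave and strictly increasing, let h(l) > 0 for l ∈ [k], and define V^avg : ℝ_+ → ℝ by V^avg(z̄) := max{ Σ_{l=1}^k h(l) v(z(l)) : z ∈ ℝ^k, z(1) ≥ z(2) ≥ … ≥ z(k) ≥ 0, (1/k) Σ_{l=1}^k z(l) = z̄ }. Then V^avg is well defined (the maximum is attained), continuous on [0, ∞), concave, strictly increasing, and differentiable at every z̄ > 0. -/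
open Finset

noncomputable section

/-- Feasible set `Z(z̄)` of nonincreasing nonnegative vectors with average `z̄`. -/
def Zset (k : ℕ) (zbar : ℝ) : Set (Fin k → ℝ) :=
  {z | Antitone z ∧ (∀ l, 0 ≤ z l) ∧ (1 / (k : ℝ)) * ∑ l, z l = zbar}

/-- `V^avg(z̄)`: the optimal CPT value subject to the average allocation being `z̄`. -/
def Vavg (k : ℕ) (h : Fin k → ℝ) (v : ℝ → ℝ) (zbar : ℝ) : ℝ :=
  sSup ((fun z : Fin k → ℝ => ∑ l, h l * v (z l)) '' Zset k zbar)

namespace Stmt15Aux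

variable {k : ℕ} {h : Fin k → ℝ} {v : ℝ → ℝ}

lemma kcast_ne (hk : 1 ≤ k) : (k : ℝ) ≠ 0 :=
  Nat.cast_ne_zero.2 (by omega)

lemma Zset_sum_eq (hk : 1 ≤ k) {zbar : ℝ} {z : Fin k → ℝ} (hz : z ∈ Zset k zbar) :
    ∑ l, z l = k * zbar := by
  have hk0 : (k : ℝ) ≠ 0 := kcast_ne hk
  have h2 := hz.2.2
  field_simp at h2
  linarith [h2]

lemma Zset_coord_le (hk : 1 ≤ k) {zbar : ℝ} {z : Fin k → ℝ} (hz : z ∈ Zset k zbar)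
    (l : Fin k) : z l ≤ k * zbar := by
  rw [← Zset_sum_eq hk hz]
  exact Finset.single_le_sum (fun i _ => hz.2.1 i) (Finset.mem_univ l)

lemma const_mem_Zset (hk : 1 ≤ k) {zbar : ℝ} (h0 : 0 ≤ zbar) :
    (fun _ : Fin k => zbar) ∈ Zset k zbar := by
  refine ⟨fun i j _ => le_rfl, fun _ => h0, ?_⟩
  have hk0 : (k : ℝ) ≠ 0 := kcast_ne hk
  rw [Finset.sum_const, Finset.card_univ, Fintype.card_fin, nsmul_eq_mul]
  field_simp

lemma bddAbove_image (hk : 1 ≤ k) (hh0 : ∀ l, 0 ≤ h l) (hmono : MonotoneOn v (Set.Ici 0))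
    {zbar : ℝ} (h0 : 0 ≤ zbar) :
    BddAbove ((fun z : Fin k → ℝ => ∑ l, h l * v (z l)) '' Zset k zbar) := by
  refine ⟨∑ l, h l * v (k * zbar), ?_⟩
  rintro _ ⟨z, hz, rfl⟩
  refine Finset.sum_le_sum fun l _ => mul_le_mul_of_nonneg_left ?_ (hh0 l)
  exact hmono (hz.2.1 l) (mul_nonneg (Nat.cast_nonneg k) h0) (Zset_coord_le hk hz l)

lemma Zset_isCompact (hk : 1 ≤ k) {zbar : ℝ} : IsCompact (Zset k zbar) := by
  have hcl : IsClosed (Zset k zbar) := by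
    have h1 : IsClosed {z : Fin k → ℝ | Antitone z} := by
      have he : {z : Fin k → ℝ | Antitone z} =
          ⋂ (p : Fin k × Fin k) (_ : p.1 ≤ p.2), {z : Fin k → ℝ | z p.2 ≤ z p.1} := by
        ext z
        simp only [Set.mem_setOf_eq, Set.mem_iInter, Antitone, Prod.forall]
      rw [he]
      exact isClosed_iInter fun p => isClosed_iInter fun _ =>
        isClosed_le (continuous_apply p.2) (continuous_apply p.1)
    have h2 : IsClosed {z : Fin k → ℝ | ∀ l, 0 ≤ z l} := by
      have he : {z : Fin k → ℝ | ∀ l, 0 ≤ z l} = ⋂ l, {z : Fin k → ℝ | 0 ≤ z l} := by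
        ext z; simp
      rw [he]
      exact isClosed_iInter fun l => isClosed_le continuous_const (continuous_apply l)
    have h3 : IsClosed {z : Fin k → ℝ | (1 / (k : ℝ)) * ∑ l, z l = zbar} :=
      isClosed_eq (continuous_const.mul (continuous_finset_sum _ fun l _ => continuous_apply l))
        continuous_const
    have he : Zset k zbar = {z : Fin k → ℝ | Antitone z} ∩
        ({z : Fin k → ℝ | ∀ l, 0 ≤ z l} ∩
          {z : Fin k → ℝ | (1 / (k : ℝ)) * ∑ l, z l = zbar}) := by
      ext z
      simp only [Zset, Set.mem_setOf_eq, Set.mem_inter_iff]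
    rw [he]
    exact h1.inter (h2.inter h3)
  have hsub : Zset k zbar ⊆ Set.Icc (fun _ : Fin k => 0) (fun _ : Fin k => (k : ℝ) * zbar) := by
    intro z hz
    exact ⟨fun l => hz.2.1 l, fun l => Zset_coord_le hk hz l⟩
  exact IsCompact.of_isClosed_subset isCompact_Icc hcl hsub

lemma obj_continuousOn (hvc : ContinuousOn v (Set.Ici 0)) {zbar : ℝ} :
    ContinuousOn (fun z : Fin k → ℝ => ∑ l, h l * v (z l)) (Zset k zbar) := by
  refine continuousOn_finset_sum Finset.univ fun l _ => ?_
  apply ContinuousOn.mul continuousOn_const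
  exact hvc.comp (continuous_apply l).continuousOn fun z hz => hz.2.1 l

lemma exists_max (hk : 1 ≤ k) (hvc : ContinuousOn v (Set.Ici 0)) {zbar : ℝ}
    (h0 : 0 ≤ zbar) :
    ∃ z ∈ Zset k zbar, ∀ z' ∈ Zset k zbar, ∑ l, h l * v (z' l) ≤ ∑ l, h l * v (z l) := by
  obtain ⟨z, hz, hmax⟩ := (Zset_isCompact hk (zbar := zbar)).exists_isMaxOn
    ⟨_, const_mem_Zset hk h0⟩ (obj_continuousOn (h := h) hvc)
  exact ⟨z, hz, fun z' hz' => hmax hz'⟩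

lemma Vavg_eq_max (hk : 1 ≤ k) (hh0 : ∀ l, 0 ≤ h l) (hmono : MonotoneOn v (Set.Ici 0))
    {zbar : ℝ} (h0 : 0 ≤ zbar) {z : Fin k → ℝ} (hz : z ∈ Zset k zbar)
    (hmax : ∀ z' ∈ Zset k zbar, ∑ l, h l * v (z' l) ≤ ∑ l, h l * v (z l)) :
    Vavg k h v zbar = ∑ l, h l * v (z l) := by
  refine le_antisymm (csSup_le ⟨_, Set.mem_image_of_mem _ hz⟩ ?_)
    (le_csSup (bddAbove_image hk hh0 hmono h0) (Set.mem_image_of_mem _ hz))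
  rintro _ ⟨z', hz', rfl⟩
  exact hmax z' hz'

lemma le_Vavg (hk : 1 ≤ k) (hh0 : ∀ l, 0 ≤ h l) (hmono : MonotoneOn v (Set.Ici 0))
    {zbar : ℝ} (h0 : 0 ≤ zbar) {z : Fin k → ℝ} (hz : z ∈ Zset k zbar) :
    ∑ l, h l * v (z l) ≤ Vavg k h v zbar :=
  le_csSup (bddAbove_image hk hh0 hmono h0) (Set.mem_image_of_mem _ hz)

lemma smul_mem_Zset (hk : 1 ≤ k) {zbar t : ℝ} (hzb : 0 < zbar) (ht : 0 ≤ t)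
    {z : Fin k → ℝ} (hz : z ∈ Zset k zbar) :
    (fun l => t / zbar * z l) ∈ Zset k t := by
  refine ⟨fun i j hij => mul_le_mul_of_nonneg_left (hz.1 hij) (div_nonneg ht hzb.le),
    fun l => mul_nonneg (div_nonneg ht hzb.le) (hz.2.1 l), ?_⟩
  have hk0 : (k : ℝ) ≠ 0 := kcast_ne hk
  have hs := Zset_sum_eq hk hz
  rw [← Finset.mul_sum, hs]
  field_simp

lemma add_mem_Zset (hk : 1 ≤ k) {zbar δ : ℝ} (hδ : 0 ≤ δ)
    {z : Fin k → ℝ} (hz : z ∈ Zset k zbar) :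
    (fun l => z l + δ) ∈ Zset k (zbar + δ) := by
  refine ⟨fun i j hij => add_le_add (hz.1 hij) le_rfl,
    fun l => add_nonneg (hz.2.1 l) hδ, ?_⟩
  have hk0 : (k : ℝ) ≠ 0 := kcast_ne hk
  have hs := Zset_sum_eq hk hz
  rw [Finset.sum_add_distrib, hs, Finset.sum_const, Finset.card_univ, Fintype.card_fin,
    nsmul_eq_mul]
  field_simp

lemma div_le_div_aux {a b c : ℝ} (hab : a ≤ b) (hc : 0 < c) : a / c ≤ b / c := by
  rw [div_le_div_iff₀ hc hc]
  exact mul_le_mul_of_nonneg_right hab hc.le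

/-- A concave function with a lower support function differentiable at a point is
differentiable at that point. -/
lemma concave_support_hasDerivAt {f g : ℝ → ℝ} {s : Set ℝ} (hf : ConcaveOn ℝ s f)
    {x d : ℝ} (hx : s ∈ nhds x) (hg : HasDerivAt g d x) (hle : ∀ y ∈ s, g y ≤ f y)
    (heq : g x = f x) : HasDerivAt f d x := by
  rw [hasDerivAt_iff_tendsto_slope] at hg ⊢
  rw [Metric.tendsto_nhdsWithin_nhds] at hg ⊢
  intro ε hε
  obtain ⟨δ₁, hδ₁, H1⟩ := hg ε hε
  obtain ⟨δ₀, hδ₀, H0⟩ := Metric.mem_nhds_iff.1 hx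
  set δ := min δ₁ δ₀ with hδdef
  have hδ : 0 < δ := lt_min hδ₁ hδ₀
  refine ⟨δ / 2, by positivity, ?_⟩
  intro y hy hyd
  have hyne : y ≠ x := hy
  rw [Real.dist_eq] at hyd
  have hball : ∀ w : ℝ, |w - x| < δ → w ∈ s := fun w hw =>
    H0 (by rw [Metric.mem_ball, Real.dist_eq]; exact hw.trans_le (min_le_right _ _))
  have hys : y ∈ s := hball y (by linarith)
  have hH1 : ∀ w : ℝ, w ≠ x → |w - x| < δ₁ → |slope g x w - d| < ε := by
    intro w hw hwd
    have := H1 (x := w) hw (by rwa [Real.dist_eq])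
    rwa [Real.dist_eq] at this
  -- bound at y itself
  have hgy : |slope g x y - d| < ε := hH1 y hyne (by
    have : δ ≤ δ₁ := min_le_left _ _
    linarith)
  rw [slope_def_field] at hgy
  rw [abs_lt] at hgy
  -- auxiliary points
  have hymmem : x - δ / 2 ∈ s := hball _ (by
    have : |x - δ / 2 - x| = δ / 2 := by
      rw [show x - δ / 2 - x = -(δ / 2) by ring, abs_neg, abs_of_nonneg (by positivity)]
    rw [this]; linarith)
  have hypmem : x + δ / 2 ∈ s := hball _ (by
    have : |x + δ / 2 - x| = δ / 2 := by
      rw [show x + δ / 2 - x = δ / 2 by ring, abs_of_nonneg (by positivity)]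
    rw [this]; linarith)
  have hgm : |slope g x (x - δ / 2) - d| < ε := by
    refine hH1 _ (by intro hc; nlinarith [hδ]) ?_
    rw [show x - δ / 2 - x = -(δ / 2) by ring, abs_neg, abs_of_nonneg (by positivity)]
    have : δ ≤ δ₁ := min_le_left _ _
    linarith
  have hgp : |slope g x (x + δ / 2) - d| < ε := by
    refine hH1 _ (by intro hc; nlinarith [hδ]) ?_
    rw [show x + δ / 2 - x = δ / 2 by ring, abs_of_nonneg (by positivity)]
    have : δ ≤ δ₁ := min_le_left _ _
    linarith
  rw [slope_def_field] at hgm hgp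
  rw [abs_lt] at hgm hgp
  rw [Real.dist_eq, abs_lt]
  have hfx : f x = g x := heq.symm
  rcases lt_or_gt_of_ne hyne with hlt | hgt
  · -- y < x
    have hyx : 0 < x - y := by linarith
    have hflip : (g y - g x) / (y - x) = (g x - g y) / (x - y) := by
      rw [show y - x = -(x - y) by ring, show g y - g x = -(g x - g y) by ring, neg_div_neg_eq]
    rw [hflip] at hgy
    have e1 : (f x - f y) / (x - y) ≤ (g x - g y) / (x - y) :=
      div_le_div_aux (by have := hle y hys; linarith) hyx
    have e2 : (f (x + δ / 2) - f x) / (x + δ / 2 - x) ≤ (f x - f y) / (x - y) :=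
      hf.slope_anti_adjacent hys hypmem hlt (by linarith)
    have e3 : (g (x + δ / 2) - g x) / (x + δ / 2 - x) ≤
        (f (x + δ / 2) - f x) / (x + δ / 2 - x) :=
      div_le_div_aux (by have := hle _ hypmem; linarith) (by linarith)
    have e5 : slope f x y = (f x - f y) / (x - y) := by
      rw [slope_comm, slope_def_field]
    rw [e5]
    exact ⟨by linarith, by linarith⟩
  · -- x < y
    have hyx : 0 < y - x := by linarith
    have e1 : (g y - g x) / (y - x) ≤ (f y - f x) / (y - x) :=
      div_le_div_aux (by have := hle y hys; linarith) hyx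
    have e2 : (f y - f x) / (y - x) ≤ (f x - f (x - δ / 2)) / (x - (x - δ / 2)) :=
      hf.slope_anti_adjacent hymmem hys (by linarith) hgt
    have e3 : (f x - f (x - δ / 2)) / (x - (x - δ / 2)) ≤
        (g x - g (x - δ / 2)) / (x - (x - δ / 2)) :=
      div_le_div_aux (by have := hle _ hymmem; linarith) (by linarith)
    have hflip : (g (x - δ / 2) - g x) / (x - δ / 2 - x) =
        (g x - g (x - δ / 2)) / (x - (x - δ / 2)) := by
      rw [show x - δ / 2 - x = -(x - (x - δ / 2)) by ring,
        show g (x - δ / 2) - g x = -(g x - g (x - δ / 2)) by ring, neg_div_neg_eq]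
    rw [hflip] at hgm
    rw [slope_def_field]
    exact ⟨by linarith, by linarith⟩

end Stmt15Aux

open Stmt15Aux in
/-- `V^avg` is well defined (the maximum is attained), continuous on
`[0, ∞)`, concave, strictly increasing, and differentiable at every `z̄ > 0`. -/
theorem stmt15 (k : ℕ) (hk : 1 ≤ k)
    (v : ℝ → ℝ)
    (hvc : ContinuousOn v (Set.Ici 0))
    (hvd : DifferentiableOn ℝ v (Set.Ici 0))
    (hvcc : ConcaveOn ℝ (Set.Ici 0) v)
    (hvm : StrictMonoOn v (Set.Ici 0))
    (hvnn : ∀ x ∈ Set.Ici (0 : ℝ), 0 ≤ v x)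
    (h : Fin k → ℝ) (hh : ∀ l, 0 < h l) :
    (∀ zbar ∈ Set.Ici (0 : ℝ), ∃ z ∈ Zset k zbar,
        (∀ z' ∈ Zset k zbar, ∑ l, h l * v (z' l) ≤ ∑ l, h l * v (z l)) ∧
        Vavg k h v zbar = ∑ l, h l * v (z l)) ∧
    ContinuousOn (Vavg k h v) (Set.Ici 0) ∧
    ConcaveOn ℝ (Set.Ici 0) (Vavg k h v) ∧
    StrictMonoOn (Vavg k h v) (Set.Ici 0) ∧
    ∀ zbar : ℝ, 0 < zbar → DifferentiableAt ℝ (Vavg k h v) zbar := by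
  have hh0 : ∀ l, 0 ≤ h l := fun l => (hh l).le
  have hmono : MonotoneOn v (Set.Ici 0) := hvm.monotoneOn
  -- Part 1 : the maximum is attained
  have part1 : ∀ zbar ∈ Set.Ici (0 : ℝ), ∃ z ∈ Zset k zbar,
      (∀ z' ∈ Zset k zbar, ∑ l, h l * v (z' l) ≤ ∑ l, h l * v (z l)) ∧
      Vavg k h v zbar = ∑ l, h l * v (z l) := by
    intro zbar hzb
    obtain ⟨z, hz, hmax⟩ := exists_max (h := h) hk hvc (Set.mem_Ici.1 hzb)
    exact ⟨z, hz, hmax, Vavg_eq_max hk hh0 hmono (Set.mem_Ici.1 hzb) hz hmax⟩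
  -- Part 3 : concavity
  have part3 : ConcaveOn ℝ (Set.Ici 0) (Vavg k h v) := by
    refine ⟨convex_Ici 0, ?_⟩
    intro x hx y hy a b ha hb hab
    obtain ⟨zx, hzx, _, hVx⟩ := part1 x hx
    obtain ⟨zy, hzy, _, hVy⟩ := part1 y hy
    have hxy : 0 ≤ a * x + b * y :=
      add_nonneg (mul_nonneg ha (Set.mem_Ici.1 hx)) (mul_nonneg hb (Set.mem_Ici.1 hy))
    have hmix : (fun l => a * zx l + b * zy l) ∈ Zset k (a * x + b * y) := by
      refine ⟨fun i j hij => add_le_add (mul_le_mul_of_nonneg_left (hzx.1 hij) ha)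
        (mul_le_mul_of_nonneg_left (hzy.1 hij) hb),
        fun l => add_nonneg (mul_nonneg ha (hzx.2.1 l)) (mul_nonneg hb (hzy.2.1 l)), ?_⟩
      have hsx := Zset_sum_eq hk hzx
      have hsy := Zset_sum_eq hk hzy
      have hk0 : (k : ℝ) ≠ 0 := kcast_ne hk
      rw [Finset.sum_add_distrib, ← Finset.mul_sum, ← Finset.mul_sum, hsx, hsy]
      field_simp
    have hval : a * (∑ l, h l * v (zx l)) + b * (∑ l, h l * v (zy l)) ≤
        ∑ l, h l * v (a * zx l + b * zy l) := by
      have hmulsum : a * (∑ l, h l * v (zx l)) + b * (∑ l, h l * v (zy l)) =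
          ∑ l, (a * (h l * v (zx l)) + b * (h l * v (zy l))) := by
        rw [Finset.mul_sum, Finset.mul_sum, Finset.sum_add_distrib]
      rw [hmulsum]
      · refine Finset.sum_le_sum fun l _ => ?_
        have hcc : a * v (zx l) + b * v (zy l) ≤ v (a * zx l + b * zy l) := by
          have := hvcc.2 (Set.mem_Ici.2 (hzx.2.1 l)) (Set.mem_Ici.2 (hzy.2.1 l)) ha hb hab
          simpa [smul_eq_mul] using this
        calc a * (h l * v (zx l)) + b * (h l * v (zy l))
            = h l * (a * v (zx l) + b * v (zy l)) := by ring
          _ ≤ h l * v (a * zx l + b * zy l) := mul_le_mul_of_nonneg_left hcc (hh0 l)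
    have hle2 : ∑ l, h l * v (a * zx l + b * zy l) ≤ Vavg k h v (a * x + b * y) :=
      le_Vavg hk hh0 hmono hxy hmix
    have : a * (∑ l, h l * v (zx l)) + b * (∑ l, h l * v (zy l)) =
        a • Vavg k h v x + b • Vavg k h v y := by
      rw [hVx, hVy]; simp [smul_eq_mul]
    rw [← this]
    calc a * (∑ l, h l * v (zx l)) + b * (∑ l, h l * v (zy l))
        ≤ ∑ l, h l * v (a * zx l + b * zy l) := hval
      _ ≤ Vavg k h v (a * x + b * y) := hle2
      _ = Vavg k h v (a • x + b • y) := by simp [smul_eq_mul]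
  -- rewrite mul sum distrib above may need adjusting; see hval
  -- Part 5 : differentiability at positive points
  have part5 : ∀ zbar : ℝ, 0 < zbar → DifferentiableAt ℝ (Vavg k h v) zbar := by
    intro zbar hzb
    obtain ⟨z, hz, hmax, hVz⟩ := part1 zbar (le_of_lt hzb)
    set g : ℝ → ℝ := fun t => ∑ l, h l * v (t / zbar * z l) with hgdef
    have hgd : DifferentiableAt ℝ g zbar := by
      apply DifferentiableAt.fun_sum
      intro l _
      refine DifferentiableAt.const_mul ?_ (h l)
      rcases eq_or_lt_of_le (hz.2.1 l) with hz0 | hzpos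
      · simp only [← hz0, mul_zero]
        exact differentiableAt_const _
      · have hinner : DifferentiableAt ℝ (fun t : ℝ => t / zbar * z l) zbar :=
          (differentiableAt_id.div_const zbar).mul_const (z l)
        have hpt : zbar / zbar * z l = z l := by
          rw [div_self hzb.ne', one_mul]
        have hvat : DifferentiableAt ℝ v (zbar / zbar * z l) := by
          rw [hpt]
          exact (hvd _ (Set.mem_Ici.2 hzpos.le)).differentiableAt (Ici_mem_nhds hzpos)
        exact hvat.comp zbar hinner
    have hle : ∀ t ∈ Set.Ici (0 : ℝ), g t ≤ Vavg k h v t := by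
      intro t ht
      have hmem : (fun l => t / zbar * z l) ∈ Zset k t :=
        smul_mem_Zset hk hzb (Set.mem_Ici.1 ht) hz
      exact le_Vavg hk hh0 hmono (Set.mem_Ici.1 ht) hmem
    have heq : g zbar = Vavg k h v zbar := by
      rw [hVz, hgdef]
      simp only [div_self hzb.ne', one_mul]
    have := concave_support_hasDerivAt part3 (Ici_mem_nhds hzb) hgd.hasDerivAt hle heq
    exact this.differentiableAt
  -- Part 4 : strict monotonicity
  have part4 : StrictMonoOn (Vavg k h v) (Set.Ici 0) := by
    intro x hx y hy hxy
    obtain ⟨zx, hzx, _, hVx⟩ := part1 x hx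
    have hδ : 0 < y - x := by linarith
    have hmem : (fun l => zx l + (y - x)) ∈ Zset k (x + (y - x)) :=
      add_mem_Zset hk hδ.le hzx
    have hxyeq : x + (y - x) = y := by ring
    rw [hxyeq] at hmem
    haveI : Nonempty (Fin k) := Fin.pos_iff_nonempty.1 hk
    have hstrict : ∑ l, h l * v (zx l) < ∑ l, h l * v (zx l + (y - x)) := by
      refine Finset.sum_lt_sum_of_nonempty Finset.univ_nonempty fun l _ => ?_
      refine mul_lt_mul_of_pos_left ?_ (hh l)
      exact hvm (Set.mem_Ici.2 (hzx.2.1 l))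
        (Set.mem_Ici.2 (add_nonneg (hzx.2.1 l) hδ.le)) (by linarith)
    calc Vavg k h v x = ∑ l, h l * v (zx l) := hVx
      _ < ∑ l, h l * v (zx l + (y - x)) := hstrict
      _ ≤ Vavg k h v y := le_Vavg hk hh0 hmono (Set.mem_Ici.1 hy) hmem
  -- Part 2 : continuity
  have part2 : ContinuousOn (Vavg k h v) (Set.Ici 0) := by
    intro x hx
    rcases eq_or_lt_of_le (Set.mem_Ici.1 hx) with hx0 | hxpos
    · -- x = 0 : squeeze
      subst hx0
      have hV0 : Vavg k h v 0 = (∑ l, h l) * v 0 := by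
        obtain ⟨z0, hz0, _, hV⟩ := part1 0 Set.self_mem_Ici
        have hz00 : ∀ l, z0 l = 0 := fun l =>
          le_antisymm (by simpa using Zset_coord_le hk hz0 l) (hz0.2.1 l)
        rw [hV, Finset.sum_mul]
        exact Finset.sum_congr rfl fun l _ => by rw [hz00 l]
      have hlow : ∀ t ∈ Set.Ici (0 : ℝ), (∑ l, h l) * v 0 ≤ Vavg k h v t := by
        intro t ht
        have h1 : (∑ l, h l) * v 0 ≤ ∑ l, h l * v t := by
          rw [Finset.sum_mul]
          exact Finset.sum_le_sum fun l _ => mul_le_mul_of_nonneg_left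
            (hmono Set.self_mem_Ici ht (Set.mem_Ici.1 ht)) (hh0 l)
        exact h1.trans (le_Vavg hk hh0 hmono (Set.mem_Ici.1 ht) (const_mem_Zset hk ht))
      have hupp : ∀ t ∈ Set.Ici (0 : ℝ), Vavg k h v t ≤ (∑ l, h l) * v ((k : ℝ) * t) := by
        intro t ht
        refine csSup_le ⟨_, Set.mem_image_of_mem _ (const_mem_Zset hk ht)⟩ ?_
        rintro _ ⟨z', hz', rfl⟩
        rw [Finset.sum_mul]
        refine Finset.sum_le_sum fun l _ => mul_le_mul_of_nonneg_left ?_ (hh0 l)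
        exact hmono (hz'.2.1 l) (mul_nonneg (Nat.cast_nonneg k) (Set.mem_Ici.1 ht))
          (Zset_coord_le hk hz' l)
      have hub : Filter.Tendsto (fun t => (∑ l, h l) * v ((k : ℝ) * t))
          (nhdsWithin 0 (Set.Ici 0)) (nhds ((∑ l, h l) * v 0)) := by
        have h2 : ContinuousWithinAt (fun t : ℝ => (k : ℝ) * t) (Set.Ici 0) 0 :=
          (continuous_const.mul continuous_id).continuousWithinAt
        have h3 : ContinuousWithinAt v (Set.Ici 0) ((fun t : ℝ => (k : ℝ) * t) 0) := by
          simp only [mul_zero]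
          exact hvc 0 Set.self_mem_Ici
        have h1 : ContinuousWithinAt (fun t : ℝ => v ((k : ℝ) * t)) (Set.Ici 0) 0 :=
          h3.comp h2 fun t ht => Set.mem_Ici.2 (mul_nonneg (Nat.cast_nonneg k) (Set.mem_Ici.1 ht))
        have := (continuousWithinAt_const (b := ∑ l, h l)).mul h1
        unfold ContinuousWithinAt at this
        simpa [Pi.mul_def] using this
      show ContinuousWithinAt (Vavg k h v) (Set.Ici 0) 0
      unfold ContinuousWithinAt
      rw [hV0]
      refine tendsto_of_tendsto_of_tendsto_of_le_of_le' tendsto_const_nhds hub ?_ ?_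
      · filter_upwards [self_mem_nhdsWithin] with t ht using hlow t ht
      · filter_upwards [self_mem_nhdsWithin] with t ht using hupp t ht
    · exact (part5 x hxpos).continuousAt.continuousWithinAt
  exact ⟨part1, part2, part3, part4, part5⟩
end
end

section
/- Let v : ℝ_+ → ℝ_+ be continuous, differentiable, concave and strictly increasing, h(l) > 0 for l ∈ [k], and V^avg(z̄) := max{ Σ_{l=1}^k h(l) v(z(l)) : z(1) ≥ … ≥ z(k) ≥ 0, (1/k) Σ_{l=1}^k z(l) = z̄ }. Fix z̄ > 0 and let z* be any maximizer. Let l̂ be the smallest l ∈ [k] with z*(l) > z*(l+1) (where z*(k+1) := 0; such l̂ exists since z̄ > 0). Then V^avg is differentiable at z̄ with derivative (V^avg)'(z̄) = (k/l̂) Σ_{l=1}^{l̂} h(l) v'(z*(l)). -/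
open Finset

noncomputable section

lemma zsum {k : ℕ} (hk : 1 ≤ k) {t : ℝ} {z : Fin k → ℝ} (hz : z ∈ Zset k t) :
    ∑ l, z l = k * t := by
  have hkne : (k : ℝ) ≠ 0 := Nat.cast_ne_zero.mpr (by omega)
  have h := hz.2.2
  rw [one_div, inv_mul_eq_iff_eq_mul₀ hkne] at h
  exact h

lemma zset_nonempty (k : ℕ) (hk : 1 ≤ k) {t : ℝ} (ht : 0 ≤ t) :
    ((fun _ : Fin k => t) ∈ Zset k t) := by
  have hkne : (k : ℝ) ≠ 0 := Nat.cast_ne_zero.mpr (by omega)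
  refine ⟨antitone_const, fun _ => ht, ?_⟩
  rw [Finset.sum_const, Finset.card_univ, Fintype.card_fin]
  field_simp
  exact nsmul_eq_mul _ _

lemma zmem_nonneg {k : ℕ} (hk : 1 ≤ k) {t : ℝ} {z : Fin k → ℝ} (hz : z ∈ Zset k t)
    (l : Fin k) : z l ≤ k * t := by
  rw [← zsum hk hz]
  exact Finset.single_le_sum (fun i _ => hz.2.1 i) (Finset.mem_univ l)

lemma bdd_above (k : ℕ) (hk : 1 ≤ k) (v : ℝ → ℝ) (hvm : MonotoneOn v (Set.Ici 0))
    (h : Fin k → ℝ) (hh : ∀ l, 0 < h l) {t : ℝ} (ht : 0 ≤ t) :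
    BddAbove ((fun z : Fin k → ℝ => ∑ l, h l * v (z l)) '' Zset k t) := by
  refine ⟨(∑ l, h l) * v (k * t), ?_⟩
  rintro y ⟨z, hz, rfl⟩
  rw [Finset.sum_mul]
  refine Finset.sum_le_sum fun l _ => ?_
  have h1 : v (z l) ≤ v (k * t) :=
    hvm (hz.2.1 l) (mul_nonneg (Nat.cast_nonneg k) ht) (zmem_nonneg hk hz l)
  exact mul_le_mul_of_nonneg_left h1 (hh l).le

/-- midpoint concavity of Vavg -/
lemma vavg_mid (k : ℕ) (hk : 1 ≤ k) (v : ℝ → ℝ) (hvm : MonotoneOn v (Set.Ici 0))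
    (hvcc : ConcaveOn ℝ (Set.Ici 0) v)
    (h : Fin k → ℝ) (hh : ∀ l, 0 < h l) {s t : ℝ} (hs : 0 ≤ s) (ht : 0 ≤ t) :
    Vavg k h v s + Vavg k h v t ≤ 2 * Vavg k h v ((s + t) / 2) := by
  have hm : (0:ℝ) ≤ (s + t) / 2 := by linarith
  have hbm := bdd_above k hk v hvm h hh hm
  have key : ∀ z1 ∈ Zset k s, ∀ z2 ∈ Zset k t,
      (∑ l, h l * v (z1 l)) + (∑ l, h l * v (z2 l)) ≤ 2 * Vavg k h v ((s + t) / 2) := by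
    intro z1 hz1 z2 hz2
    set zm : Fin k → ℝ := fun l => (z1 l + z2 l) / 2 with hzm
    have hzmmem : zm ∈ Zset k ((s + t) / 2) := by
      refine ⟨fun i j hij => ?_, fun l => by
        have := hz1.2.1 l; have := hz2.2.1 l; simp only [hzm]; linarith, ?_⟩
      · have := hz1.1 hij; have := hz2.1 hij; simp only [hzm]; linarith
      · have h1 := hz1.2.2; have h2 := hz2.2.2
        simp only [hzm, ← Finset.sum_div, Finset.sum_add_distrib]
        have hkne : (k : ℝ) ≠ 0 := Nat.cast_ne_zero.mpr (by omega)
        field_simp at h1 h2 ⊢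
        linarith
    have hconc : ∀ l : Fin k, (v (z1 l) + v (z2 l)) / 2 ≤ v (zm l) := by
      intro l
      have := hvcc.2 (hz1.2.1 l) (hz2.2.1 l) (by norm_num : (0:ℝ) ≤ 1/2)
        (by norm_num : (0:ℝ) ≤ 1/2) (by norm_num)
      simp only [smul_eq_mul] at this
      have harg : (1:ℝ)/2 * z1 l + 1/2 * z2 l = zm l := by simp only [hzm]; ring
      rw [harg] at this
      linarith
    have hFm : (∑ l, h l * v (zm l)) ≤ Vavg k h v ((s + t) / 2) :=
      le_csSup hbm ⟨zm, hzmmem, rfl⟩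
    have : (∑ l, h l * v (z1 l)) + (∑ l, h l * v (z2 l)) ≤ 2 * ∑ l, h l * v (zm l) := by
      rw [Finset.mul_sum, ← Finset.sum_add_distrib]
      refine Finset.sum_le_sum fun l _ => ?_
      have := hconc l
      have hl := (hh l).le
      nlinarith [hconc l]
    linarith
  have hne1 : ((fun z : Fin k → ℝ => ∑ l, h l * v (z l)) '' Zset k s).Nonempty :=
    ⟨_, ⟨_, zset_nonempty k hk hs, rfl⟩⟩
  have hne2 : ((fun z : Fin k → ℝ => ∑ l, h l * v (z l)) '' Zset k t).Nonempty :=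
    ⟨_, ⟨_, zset_nonempty k hk ht, rfl⟩⟩
  have h1 : Vavg k h v s ≤ 2 * Vavg k h v ((s + t) / 2) - Vavg k h v t := by
    refine csSup_le hne1 ?_
    rintro y ⟨z1, hz1, rfl⟩
    have h2 : Vavg k h v t ≤ 2 * Vavg k h v ((s + t) / 2) - ∑ l, h l * v (z1 l) := by
      refine csSup_le hne2 ?_
      rintro y ⟨z2, hz2, rfl⟩
      have := key z1 hz1 z2 hz2
      linarith
    linarith
  linarith

/-- Fix `z̄ > 0`, let `z*` be any maximizer defining `V^avg(z̄)`, and let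
`l̂` be the smallest (0-indexed) `l` with `z* l > z* (l+1)` (with `z* (k+1) := 0`).  Then
`V^avg` is differentiable at `z̄` with derivative `(k/l̂₁) ∑_{l ≤ l̂} h l * v'(z* l)`,
where `l̂₁ = l̂ + 1` is the 1-indexed position. -/
theorem stmt16 (k : ℕ) (hk : 1 ≤ k)
    (v v' : ℝ → ℝ)
    (hvc : ContinuousOn v (Set.Ici 0))
    (hvd : ∀ x ∈ Set.Ici (0 : ℝ), HasDerivWithinAt v (v' x) (Set.Ici 0) x)
    (hvcc : ConcaveOn ℝ (Set.Ici 0) v)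
    (hvm : StrictMonoOn v (Set.Ici 0))
    (hvnn : ∀ x ∈ Set.Ici (0 : ℝ), 0 ≤ v x)
    (h : Fin k → ℝ) (hh : ∀ l, 0 < h l)
    (zbar : ℝ) (hzbar : 0 < zbar)
    (zstar : Fin k → ℝ) (hmem : zstar ∈ Zset k zbar)
    (hmax : ∀ z ∈ Zset k zbar, ∑ l, h l * v (z l) ≤ ∑ l, h l * v (zstar l))
    (lhat : Fin k)
    (hlhat : nxt zstar lhat < zstar lhat)
    (hlmin : ∀ l : Fin k, nxt zstar l < zstar l → lhat ≤ l) :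
    HasDerivAt (Vavg k h v)
      (((k : ℝ) / ((lhat : ℕ) + 1)) *
        ∑ l ∈ univ.filter (fun l => l ≤ lhat), h l * v' (zstar l)) zbar := by
  classical
  have hkR : (0:ℝ) < k := by exact_mod_cast hk
  have hl1 : (0:ℝ) < ((lhat : ℕ) : ℝ) + 1 := by positivity
  set c : ℝ := (k : ℝ) / (((lhat : ℕ) : ℝ) + 1) with hc
  set d : ℝ := c * ∑ l ∈ univ.filter (fun l => l ≤ lhat), h l * v' (zstar l) with hd
  have hcpos : 0 < c := div_pos hkR hl1
  set gap : ℝ := zstar lhat - nxt zstar lhat with hgapdef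
  have hgap : 0 < gap := sub_pos.mpr hlhat
  have hnxt0 : 0 ≤ nxt zstar lhat := by
    unfold nxt
    split
    · exact hmem.2.1 _
    · exact le_refl _
  have hzl0 : 0 < zstar lhat := lt_of_le_of_lt hnxt0 hlhat
  have hvmono : MonotoneOn v (Set.Ici 0) := hvm.monotoneOn
  set w : ℝ → Fin k → ℝ :=
    fun t l => zstar l + (if l ≤ lhat then c * (t - zbar) else 0) with hw
  set g : ℝ → ℝ := fun t => ∑ l, h l * v (w t l) with hg
  have hcard : (univ.filter (fun l : Fin k => l ≤ lhat)).card = (lhat : ℕ) + 1 := by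
    have heq : univ.filter (fun l : Fin k => l ≤ lhat) = Finset.Iic lhat := by
      ext x; simp
    rw [heq, Fin.card_Iic]
  have hsum_star : ∑ l, zstar l = k * zbar := zsum hk hmem
  have hnxtle : ∀ j : Fin k, lhat < j → zstar j ≤ nxt zstar lhat := by
    intro j hj
    have hjval : (lhat : ℕ) < (j : ℕ) := hj
    have hlt : (lhat : ℕ) + 1 < k := lt_of_le_of_lt hjval j.isLt
    unfold nxt
    rw [dif_pos hlt]
    exact hmem.1 (show (⟨(lhat:ℕ)+1, hlt⟩ : Fin k) ≤ j by
      rw [Fin.le_def]; simpa using hjval)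
  -- feasibility of the perturbed vector
  have hfeas : ∀ t : ℝ, -gap ≤ c * (t - zbar) → w t ∈ Zset k t := by
    intro t hδ
    have hδgap : -(zstar lhat - nxt zstar lhat) ≤ c * (t - zbar) := hδ
    refine ⟨?_, ?_, ?_⟩
    · intro i j hij
      by_cases hj : j ≤ lhat
      · have hi : i ≤ lhat := le_trans hij hj
        simp only [hw, if_pos hi, if_pos hj]
        have := hmem.1 hij
        linarith
      · by_cases hi : i ≤ lhat
        · simp only [hw, if_pos hi, if_neg hj]
          have h1 : zstar j ≤ nxt zstar lhat := hnxtle j (not_le.mp hj)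
          have h2 : zstar lhat ≤ zstar i := hmem.1 hi
          linarith
        · simp only [hw, if_neg hi, if_neg hj]
          have := hmem.1 hij; linarith
    · intro l
      by_cases hl : l ≤ lhat
      · simp only [hw, if_pos hl]
        have h2 : zstar lhat ≤ zstar l := hmem.1 hl
        linarith
      · simp only [hw, if_neg hl]
        have := hmem.2.1 l; linarith
    · have hsplit : ∑ l, w t l
          = (∑ l, zstar l) + ∑ l, (if l ≤ lhat then c * (t - zbar) else 0) := by
        simp only [hw, Finset.sum_add_distrib]
      have hite : ∑ l, (if l ≤ lhat then c * (t - zbar) else 0)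
          = (((lhat : ℕ) : ℝ) + 1) * (c * (t - zbar)) := by
        rw [← Finset.sum_filter, Finset.sum_const, hcard, nsmul_eq_mul]
        push_cast
        ring
      have hcc : (((lhat : ℕ) : ℝ) + 1) * c = (k : ℝ) := by
        rw [hc]; field_simp
      have hkne : (k : ℝ) ≠ 0 := ne_of_gt hkR
      rw [hsplit, hite, hsum_star]
      field_simp
      nlinarith [hcc]
  -- value at zbar
  have hwzbar : w zbar = zstar := by
    funext l; simp [hw]
  have hgzbar : g zbar = ∑ l, h l * v (zstar l) := by
    rw [hg]; simp [hwzbar]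
  have hbddz := bdd_above k hk v hvmono h hh hzbar.le
  have hVzbar : Vavg k h v zbar = g zbar := by
    rw [hgzbar]
    refine le_antisymm (csSup_le ⟨_, ⟨zstar, hmem, rfl⟩⟩ ?_)
      (le_csSup hbddz ⟨zstar, hmem, rfl⟩)
    rintro y ⟨z, hz, rfl⟩
    exact hmax z hz
  -- derivative of g at zbar
  have hg' : HasDerivAt g d zbar := by
    have hterm : ∀ l : Fin k, HasDerivAt (fun t => h l * v (w t l))
        (if l ≤ lhat then h l * (v' (zstar l) * c) else 0) zbar := by
      intro l
      by_cases hl : l ≤ lhat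
      · have hinner : HasDerivAt (fun t => zstar l + c * (t - zbar)) c zbar := by
          simpa using (((hasDerivAt_id zbar).sub_const zbar).const_mul c).const_add (zstar l)
        have hpos : 0 < zstar l := lt_of_lt_of_le hzl0 (hmem.1 hl)
        have houter : HasDerivAt v (v' (zstar l)) (zstar l) :=
          (hvd _ hpos.le).hasDerivAt (Ici_mem_nhds hpos)
        have h0 : zstar l = zstar l + c * (zbar - zbar) := by ring
        rw [h0] at houter
        have hcomp := (houter.comp zbar hinner).const_mul (h l)
        simp only [sub_self, mul_zero, add_zero] at hcomp
        have hfun : (fun t => h l * v (w t l))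
            = (fun y => h l * (v ∘ fun t => zstar l + c * (t - zbar)) y) := by
          funext t; simp [hw, if_pos hl, Function.comp]
        rw [if_pos hl, hfun]
        exact hcomp
      · rw [if_neg hl]
        have : (fun t => h l * v (w t l)) = fun _ => h l * v (zstar l) := by
          funext t; simp [hw, if_neg hl]
        rw [this]
        exact hasDerivAt_const _ _
    have hsum := HasDerivAt.fun_sum (u := univ) (fun l _ => hterm l)
    have hds : (∑ l : Fin k, if l ≤ lhat then h l * (v' (zstar l) * c) else 0) = d := by
      rw [← Finset.sum_filter, hd, Finset.mul_sum]
      exact Finset.sum_congr rfl fun l _ => by ring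
    rw [hds] at hsum
    exact hsum
  -- slope of g tends to d
  have hφ : Filter.Tendsto (slope g zbar) (nhdsWithin zbar {zbar}ᶜ) (nhds d) :=
    hasDerivAt_iff_tendsto_slope.mp hg'
  have hrefl : Filter.Tendsto (fun t => 2 * zbar - t)
      (nhdsWithin zbar {zbar}ᶜ) (nhdsWithin zbar {zbar}ᶜ) := by
    rw [tendsto_nhdsWithin_iff]
    constructor
    · have hcont : Filter.Tendsto (fun t : ℝ => 2 * zbar - t) (nhds zbar)
          (nhds (2 * zbar - zbar)) :=
        ((continuous_const.sub continuous_id).tendsto zbar)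
      have : 2 * zbar - zbar = zbar := by ring
      rw [this] at hcont
      exact hcont.mono_left nhdsWithin_le_nhds
    · filter_upwards [self_mem_nhdsWithin] with x hx
      simp only [Set.mem_compl_iff, Set.mem_singleton_iff] at hx ⊢
      intro hcon
      apply hx
      linarith
  have hψ : Filter.Tendsto (fun t => slope g zbar (2 * zbar - t))
      (nhdsWithin zbar {zbar}ᶜ) (nhds d) := hφ.comp hrefl
  -- epsilon neighborhood facts
  set ε : ℝ := min zbar (gap / c) with hε
  have hεpos : 0 < ε := lt_min hzbar (div_pos hgap hcpos)
  have hδbound : ∀ t : ℝ, |t - zbar| < ε → -gap ≤ c * (t - zbar) := by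
    intro t ht
    have h1 : |t - zbar| ≤ gap / c := le_of_lt (lt_of_lt_of_le ht (min_le_right _ _))
    have h2 : c * |t - zbar| ≤ gap := by
      have := mul_le_mul_of_nonneg_left h1 hcpos.le
      calc c * |t - zbar| ≤ c * (gap / c) := this
        _ = gap := by field_simp
    have h3 : -|t - zbar| ≤ t - zbar := neg_abs_le _
    nlinarith
  have htpos : ∀ t : ℝ, |t - zbar| < ε → 0 < t := by
    intro t ht
    have h1 : |t - zbar| < zbar := lt_of_lt_of_le ht (min_le_left _ _)
    have := abs_lt.mp h1
    linarith [this.1]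
  have hgleV : ∀ t : ℝ, |t - zbar| < ε → g t ≤ Vavg k h v t := by
    intro t ht
    exact le_csSup (bdd_above k hk v hvmono h hh (htpos t ht).le)
      ⟨w t, hfeas t (hδbound t ht), rfl⟩
  -- main squeeze bounds
  have hkey : ∀ t : ℝ, |t - zbar| < ε → t ≠ zbar →
      min (slope g zbar t) (slope g zbar (2 * zbar - t)) ≤ slope (Vavg k h v) zbar t ∧
      slope (Vavg k h v) zbar t ≤ max (slope g zbar t) (slope g zbar (2 * zbar - t)) := by
    intro t ht htne
    set s : ℝ := 2 * zbar - t with hs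
    have hsz : s - zbar = -(t - zbar) := by rw [hs]; ring
    have hts : |s - zbar| < ε := by rw [hsz, abs_neg]; exact ht
    have hVt := hgleV t ht
    have hVs := hgleV s hts
    have hmid : Vavg k h v s + Vavg k h v t ≤ 2 * Vavg k h v zbar := by
      have := vavg_mid k hk v hvmono hvcc h hh (htpos s hts).le (htpos t ht).le
      have harg : (s + t) / 2 = zbar := by rw [hs]; ring
      rw [harg] at this
      exact this
    have hslopet : slope (Vavg k h v) zbar t
        = (Vavg k h v t - g zbar) / (t - zbar) := by
      rw [slope_def_field, hVzbar]
    have hslopegt : slope g zbar t = (g t - g zbar) / (t - zbar) := slope_def_field g _ _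
    have hsloges : slope g zbar s = (g zbar - g s) / (t - zbar) := by
      rw [slope_def_field, hsz, div_neg, ← neg_div, neg_sub]
    rcases lt_or_gt_of_ne htne with hlt | hgt
    · -- t < zbar
      have hneg : t - zbar < 0 := by linarith
      constructor
      · refine le_trans (min_le_right _ _) ?_
        rw [hsloges, hslopet, div_le_div_right_of_neg hneg]
        linarith [hVs, hVzbar, hmid]
      · refine le_trans ?_ (le_max_left _ _)
        rw [hslopegt, hslopet, div_le_div_right_of_neg hneg]
        linarith [hVt]
    · -- t > zbar
      have hpos : 0 < t - zbar := by linarith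
      constructor
      · refine le_trans (min_le_left _ _) ?_
        rw [hslopegt, hslopet, div_le_div_iff_of_pos_right hpos]
        linarith [hVt]
      · refine le_trans ?_ (le_max_right _ _)
        rw [hsloges, hslopet, div_le_div_iff_of_pos_right hpos]
        linarith [hVs, hVzbar, hmid]
  -- eventual bounds in the punctured neighborhood
  have hev : ∀ᶠ t in nhdsWithin zbar {zbar}ᶜ, |t - zbar| < ε ∧ t ≠ zbar := by
    have h1 : ∀ᶠ t in nhds zbar, |t - zbar| < ε := by
      have := Metric.ball_mem_nhds zbar hεpos
      filter_upwards [this] with x hx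
      rwa [Metric.mem_ball, Real.dist_eq] at hx
    have h2 := h1.filter_mono (nhdsWithin_le_nhds (s := {zbar}ᶜ))
    filter_upwards [h2, self_mem_nhdsWithin] with x hx1 hx2
    exact ⟨hx1, hx2⟩
  rw [hasDerivAt_iff_tendsto_slope]
  have hmin := hφ.min hψ
  have hmax := hφ.max hψ
  rw [min_self] at hmin
  rw [max_self] at hmax
  refine tendsto_of_tendsto_of_tendsto_of_le_of_le' hmin hmax ?_ ?_
  · filter_upwards [hev] with t ht
    exact (hkey t ht.1 ht.2).1
  · filter_upwards [hev] with t ht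
    exact (hkey t ht.1 ht.2).2
end
end

section
/- Let w : [0,1] → [0,1] be continuous and strictly increasing with w(0) = 0 and w(1) = 1, and suppose there exists p̃ ∈ [0,1] such that w is concave on [0, p̃] and convex on [p̃, 1]. Let w* : [0,1] → [0,1] be the minimum concave function dominating w (i.e., w* is concave, w*(p) ≥ w(p) for all p ∈ [0,1], and w* ≤ g for every concave g : [0,1] → ℝ with g ≥ w), and let p* ∈ [0,1] be the smallest probability such that w* is affine on the interval [p*, 1]. Then p* ≤ p̃ and w*(p) = w(p) for all p ∈ [0, p*]. -/
lemma glue_aux (f : ℝ → ℝ) (a b t u v : ℝ) (hut : u ≤ t)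
    (hf : ConcaveOn ℝ (Set.Icc u t) f)
    (hft : f t = a * t + b)
    (hle : ∀ p ∈ Set.Icc u t, f p ≤ a * p + b)
    {x y lam mu : ℝ} (hx : x ∈ Set.Icc u v) (hy : y ∈ Set.Icc u v)
    (hxy : x ≤ y) (hlam : 0 ≤ lam) (hmu : 0 ≤ mu) (hs : lam + mu = 1) :
    lam * (if x ≤ t then f x else a * x + b) + mu * (if y ≤ t then f y else a * y + b)
      ≤ (if lam * x + mu * y ≤ t then f (lam * x + mu * y) else a * (lam * x + mu * y) + b) := by
  set z := lam * x + mu * y with hz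
  have e1 : z - x = mu * (y - x) := by rw [hz]; linear_combination x * hs
  have e2 : y - z = lam * (y - x) := by rw [hz]; linear_combination (-y) * hs
  have hxz : x ≤ z := by linarith [e1, mul_nonneg hmu (sub_nonneg.2 hxy)]
  have hzy : z ≤ y := by linarith [e2, mul_nonneg hlam (sub_nonneg.2 hxy)]
  have keq : a * z + b = lam * (a * x + b) + mu * (a * y + b) := by
    rw [hz]; linear_combination (-b) * hs
  by_cases hyt : y ≤ t
  · have hxt : x ≤ t := le_trans hxy hyt
    have hzt : z ≤ t := le_trans hzy hyt
    simp only [if_pos hxt, if_pos hyt, if_pos hzt]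
    have := hf.2 ⟨hx.1, hxt⟩ ⟨hy.1, hyt⟩ hlam hmu hs
    simpa using this
  · push_neg at hyt
    by_cases hxt : x ≤ t
    · by_cases hzt : z ≤ t
      · simp only [if_pos hxt, if_neg (not_le.2 hyt), if_pos hzt]
        rcases eq_or_lt_of_le hxt with heq | hlt
        · have hzeq : z = lam * t + mu * y := by rw [hz, heq]
          have h3 : z - t = mu * (y - t) := by
            rw [hzeq]; linear_combination t * hs
          have hmu0 : mu ≤ 0 := by nlinarith [h3, hzt, hyt]
          have hmu0' : mu = 0 := le_antisymm hmu0 hmu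
          have hlam1 : lam = 1 := by linarith
          have hzx : z = x := by rw [hz, hmu0', hlam1]; ring
          rw [hzx, hmu0', hlam1]; simp
        · set s : ℝ := (t - z) / (t - x) with hsdef
          have htx : 0 < t - x := by linarith
          have hs0 : 0 ≤ s := div_nonneg (by linarith) htx.le
          have hsmul : s * (t - x) = t - z := div_mul_cancel₀ _ htx.ne'
          have hs1 : s ≤ 1 := by rw [hsdef, div_le_one htx]; linarith
          have hconcav := hf.2 ⟨hx.1, hlt.le⟩ ⟨hut, le_refl t⟩ hs0
            (by linarith : (0:ℝ) ≤ 1 - s) (by ring)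
          simp only [smul_eq_mul] at hconcav
          have hzeq : s * x + (1 - s) * t = z := by linear_combination -hsmul
          rw [hzeq] at hconcav
          have hlams : s ≤ lam := by
            have h4 : lam * (t - x) - (t - z) = mu * (y - t) := by
              rw [hz]; linear_combination t * hs
            rw [hsdef, div_le_iff₀ htx]
            linarith [h4, mul_nonneg hmu (by linarith : (0:ℝ) ≤ y - t)]
          have hfx : f x ≤ a * x + b := hle x ⟨hx.1, hlt.le⟩
          have h1 : lam * x + mu * y = s * x + (1 - s) * t := by rw [← hz, hzeq]
          have key : lam * (a * x + b) + mu * (a * y + b)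
              = s * (a * x + b) + (1 - s) * (a * t + b) := by
            linear_combination a * h1 + b * hs
          have hfin : lam * f x + mu * (a * y + b) ≤ s * f x + (1 - s) * f t := by
            nlinarith [key, hft, mul_nonneg (sub_nonneg.2 hlams) (sub_nonneg.2 hfx)]
          linarith [hfin, hconcav]
      · push_neg at hzt
        simp only [if_pos hxt, if_neg (not_le.2 hyt), if_neg (not_le.2 hzt)]
        have hfx : f x ≤ a * x + b := hle x ⟨hx.1, hxt⟩
        nlinarith [keq, mul_nonneg hlam (sub_nonneg.2 hfx)]
    · push_neg at hxt
      have hzt : ¬ z ≤ t := by push_neg; linarith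
      simp only [if_neg (not_le.2 hxt), if_neg (not_le.2 hyt), if_neg hzt]
      linarith [keq]

lemma glue_concave (f : ℝ → ℝ) (a b t u v : ℝ) (hut : u ≤ t) (htv : t ≤ v)
    (hf : ConcaveOn ℝ (Set.Icc u t) f)
    (hft : f t = a * t + b)
    (hle : ∀ p ∈ Set.Icc u t, f p ≤ a * p + b) :
    ConcaveOn ℝ (Set.Icc u v) (fun p => if p ≤ t then f p else a * p + b) := by
  refine ⟨convex_Icc u v, ?_⟩
  intro x hx y hy lam mu hlam hmu hs
  simp only [smul_eq_mul]
  rcases le_total x y with h | h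
  · exact glue_aux f a b t u v hut hf hft hle hx hy h hlam hmu hs
  · have h2 := glue_aux f a b t u v hut hf hft hle hy hx h hmu hlam (by linarith)
    rw [show mu * y + lam * x = lam * x + mu * y from by ring] at h2
    linarith [h2]

/-- Let `w` be a continuous strictly increasing probability weighting
function, concave on `[0, p̃]` and convex on `[p̃, 1]`.  Let `w*` be the minimum concave
function dominating `w` and `p*` the smallest probability such that `w*` is affine on
`[p*, 1]`.  Then `p* ≤ p̃` and `w* = w` on `[0, p*]`. -/
theorem stmt17
    (w : ℝ → ℝ)
    (hwc : ContinuousOn w (Set.Icc 0 1))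
    (hwm : StrictMonoOn w (Set.Icc 0 1))
    (hw0 : w 0 = 0) (hw1 : w 1 = 1)
    (ptilde : ℝ) (hpt : ptilde ∈ Set.Icc (0 : ℝ) 1)
    (hconc : ConcaveOn ℝ (Set.Icc 0 ptilde) w)
    (hconv : ConvexOn ℝ (Set.Icc ptilde 1) w)
    (wstar : ℝ → ℝ)
    (hwsconc : ConcaveOn ℝ (Set.Icc 0 1) wstar)
    (hdom : ∀ p ∈ Set.Icc (0 : ℝ) 1, w p ≤ wstar p)
    (hminimal : ∀ g : ℝ → ℝ, ConcaveOn ℝ (Set.Icc 0 1) g →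
      (∀ p ∈ Set.Icc (0 : ℝ) 1, w p ≤ g p) → ∀ p ∈ Set.Icc (0 : ℝ) 1, wstar p ≤ g p)
    (pstar : ℝ) (hps : pstar ∈ Set.Icc (0 : ℝ) 1)
    (haff : ∃ a b : ℝ, ∀ p ∈ Set.Icc pstar 1, wstar p = a * p + b)
    (hpsmin : ∀ q ∈ Set.Icc (0 : ℝ) 1,
      (∃ a b : ℝ, ∀ p ∈ Set.Icc q 1, wstar p = a * p + b) → pstar ≤ q) :
    pstar ≤ ptilde ∧ ∀ p ∈ Set.Icc 0 pstar, wstar p = w p := by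
  rcases eq_or_lt_of_le hpt.2 with hpt1 | hpt1
  · -- ptilde = 1 : w itself is concave on [0,1], so wstar = w
    have hconc' : ConcaveOn ℝ (Set.Icc 0 1) w := by rw [← hpt1]; exact hconc
    have hle := hminimal w hconc' (fun p _ => le_refl _)
    refine ⟨hpt1 ▸ hps.2, fun p hp => ?_⟩
    have hp1 : p ∈ Set.Icc (0:ℝ) 1 := ⟨hp.1, le_trans hp.2 hps.2⟩
    exact le_antisymm (hle p hp1) (hdom p hp1)
  · -- ptilde < 1
    -- minimize the chord slope φ p = (1 - w p)/(1 - p) over [0, ptilde]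
    have hKc : IsCompact (Set.Icc 0 ptilde) := isCompact_Icc
    have hKne : (Set.Icc 0 ptilde).Nonempty := Set.nonempty_Icc.2 hpt.1
    have hsub : Set.Icc 0 ptilde ⊆ Set.Icc (0:ℝ) 1 :=
      Set.Icc_subset_Icc le_rfl hpt.2
    have hφc : ContinuousOn (fun p => (1 - w p) / (1 - p)) (Set.Icc 0 ptilde) := by
      apply ContinuousOn.div
      · exact continuousOn_const.sub (hwc.mono hsub)
      · exact continuousOn_const.sub continuousOn_id
      · intro p hp
        have : p < 1 := lt_of_le_of_lt hp.2 hpt1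
        intro h; linarith [sub_eq_zero.1 h]
    obtain ⟨t, htK, htmin⟩ := hKc.exists_isMinOn hKne hφc
    have ht1 : t < 1 := lt_of_le_of_lt htK.2 hpt1
    have h1t : 0 < 1 - t := by linarith
    set a : ℝ := (1 - w t) / (1 - t) with hadef
    set b : ℝ := 1 - a with hbdef
    have ha : a * (1 - t) = 1 - w t := div_mul_cancel₀ _ h1t.ne'
    have hwt : w t = a * t + b := by rw [hbdef]; linear_combination ha
    have hab1 : a * 1 + b = 1 := by rw [hbdef]; ring
    -- F1 : w ≤ L on [0, ptilde]
    have F1 : ∀ p ∈ Set.Icc 0 ptilde, w p ≤ a * p + b := by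
      intro p hp
      have h1p : 0 < 1 - p := by linarith [hp.2]
      have hmin := isMinOn_iff.1 htmin p hp
      rw [div_le_div_iff₀ h1t h1p] at hmin
      have key : a * (1 - p) ≤ 1 - w p := by
        rw [hadef, div_mul_eq_mul_div, div_le_iff₀ h1t]
        linarith [hmin]
      rw [hbdef]; linarith [key]
    -- F3 : w ≤ L on [ptilde, 1]
    have F3 : ∀ p ∈ Set.Icc ptilde 1, w p ≤ a * p + b := by
      intro p hp
      have h1pt : 0 < 1 - ptilde := by linarith
      set lam : ℝ := (1 - p) / (1 - ptilde) with hlamdef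
      set mu : ℝ := (p - ptilde) / (1 - ptilde) with hmudef
      have hlam0 : 0 ≤ lam := div_nonneg (by linarith [hp.2]) h1pt.le
      have hmu0 : 0 ≤ mu := div_nonneg (by linarith [hp.1]) h1pt.le
      have hsum : lam + mu = 1 := by
        rw [hlamdef, hmudef, ← add_div, div_eq_one_iff_eq h1pt.ne']; ring
      have hcomb : lam * ptilde + mu * 1 = p := by
        rw [hlamdef, hmudef]; field_simp; ring
      have hcx := hconv.2 (Set.left_mem_Icc.2 hpt1.le) (Set.right_mem_Icc.2 hpt1.le)
        hlam0 hmu0 hsum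
      simp only [smul_eq_mul] at hcx
      rw [hcomb] at hcx
      have hwpt : w ptilde ≤ a * ptilde + b := F1 ptilde ⟨hpt.1, le_refl _⟩
      calc w p ≤ lam * w ptilde + mu * w 1 := hcx
        _ ≤ lam * (a * ptilde + b) + mu * (a * 1 + b) := by
            rw [hw1, hab1]
            exact add_le_add (mul_le_mul_of_nonneg_left hwpt hlam0) le_rfl
        _ = a * p + b := by linear_combination a * hcomb + b * hsum
    have Fall : ∀ p ∈ Set.Icc (0:ℝ) 1, w p ≤ a * p + b := by
      intro p hp
      rcases le_total p ptilde with h | h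
      · exact F1 p ⟨hp.1, h⟩
      · exact F3 p ⟨h, hp.2⟩
    -- the glued function g
    set g : ℝ → ℝ := fun p => if p ≤ t then w p else a * p + b with hgdef
    have hwconc_t : ConcaveOn ℝ (Set.Icc 0 t) w :=
      hconc.subset (Set.Icc_subset_Icc le_rfl htK.2) (convex_Icc 0 t)
    have hgt : t ∈ Set.Icc (0:ℝ) 1 := ⟨htK.1, ht1.le⟩
    have hgconc : ConcaveOn ℝ (Set.Icc 0 1) g :=
      glue_concave w a b t 0 1 htK.1 ht1.le hwconc_t hwt
        (fun p hp => F1 p ⟨hp.1, le_trans hp.2 htK.2⟩)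
    have hgmaj : ∀ p ∈ Set.Icc (0:ℝ) 1, w p ≤ g p := by
      intro p hp
      rw [hgdef]
      by_cases h : p ≤ t
      · simp [h]
      · simp only [if_neg h]; exact Fall p hp
    have hws_le := hminimal g hgconc hgmaj
    -- wstar = w = L at t, wstar 1 = 1
    have hwst : wstar t = w t := by
      refine le_antisymm ?_ (hdom t hgt)
      have h2 := hws_le t hgt
      simp only [hgdef] at h2
      rwa [if_pos (le_refl t)] at h2
    have hws1 : wstar 1 = 1 := by
      have hd := hdom 1 (Set.right_mem_Icc.2 zero_le_one)
      rw [hw1] at hd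
      refine le_antisymm ?_ hd
      have h2 := hws_le 1 (Set.right_mem_Icc.2 zero_le_one)
      simp only [hgdef] at h2
      rw [if_neg (not_le.2 ht1)] at h2
      linarith [h2, hab1]
    -- wstar ≥ L on [t,1] by concavity
    have hws_ge : ∀ p ∈ Set.Icc t 1, a * p + b ≤ wstar p := by
      intro p hp
      set lam : ℝ := (1 - p) / (1 - t) with hlamdef
      set mu : ℝ := (p - t) / (1 - t) with hmudef
      have hlam0 : 0 ≤ lam := div_nonneg (by linarith [hp.2]) h1t.le
      have hmu0 : 0 ≤ mu := div_nonneg (by linarith [hp.1]) h1t.le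
      have hsum : lam + mu = 1 := by
        rw [hlamdef, hmudef, ← add_div, div_eq_one_iff_eq h1t.ne']; ring
      have hcomb : lam * t + mu * 1 = p := by
        rw [hlamdef, hmudef]; field_simp; ring
      have hcv := hwsconc.2 hgt (Set.right_mem_Icc.2 zero_le_one) hlam0 hmu0 hsum
      simp only [smul_eq_mul] at hcv
      rw [hcomb] at hcv
      rw [hwst, hwt, hws1] at hcv
      calc a * p + b = lam * (a * t + b) + mu * 1 := by
            linear_combination (-a) * hcomb + (-b) * hsum + (-mu) * hab1
        _ ≤ wstar p := hcv
    -- wstar is affine on [t,1]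
    have haffine : ∀ p ∈ Set.Icc t 1, wstar p = a * p + b := by
      intro p hp
      refine le_antisymm ?_ (hws_ge p hp)
      have hle := hws_le p ⟨le_trans htK.1 hp.1, hp.2⟩
      simp only [hgdef] at hle
      by_cases h : p ≤ t
      · have hpt' : p = t := le_antisymm h hp.1
        rw [if_pos h] at hle
        rw [hpt']; rw [hpt'] at hle; linarith [hle, hwt]
      · rwa [if_neg h] at hle
    have hple : pstar ≤ t := hpsmin t hgt ⟨a, b, haffine⟩
    refine ⟨le_trans hple htK.2, fun p hp => ?_⟩
    have hp1 : p ∈ Set.Icc (0:ℝ) 1 := ⟨hp.1, le_trans hp.2 hps.2⟩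
    have hle := hws_le p hp1
    simp only [hgdef] at hle
    rw [if_pos (le_trans hp.2 hple)] at hle
    exact le_antisymm hle (hdom p hp1)
end

section
/- Let w : [0,1] → [0,1] be continuous and strictly increasing with w(0) = 0 and w(1) = 1, and suppose there exists p̃ ∈ [0,1] such that w is concave on [0, p̃] and convex on [p̃, 1]. Let w* be the minimum concave function dominating w and p* the smallest probability such that w* is affine on [p*, 1]. If p* < 1, then for every p¹ ∈ [p*, 1) and every p ∈ [p¹, 1], w(p) ≤ w(p¹) + (p − p¹)·(1 − w(p¹))/(1 − p¹). Equivalently, the function g(p) := (1 − w(p))/(1 − p) is nondecreasing on [p*, 1). -/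
lemma affine_concaveOn' (s : Set ℝ) (hs : Convex ℝ s) (a b : ℝ) :
    ConcaveOn ℝ s (fun p => a * p + b) := by
  refine ⟨hs, ?_⟩
  intro x _ y _ la mu hla hmu hlm
  have h : mu = 1 - la := by linarith
  subst h
  simp only [smul_eq_mul]
  apply le_of_eq
  ring

lemma glue_concave' (f : ℝ → ℝ) (d c s t : ℝ)
    (hc0 : 0 ≤ c) (hcd : c ≤ d) (hd1 : d ≤ 1)
    (hf : ConcaveOn ℝ (Set.Icc 0 d) f)
    (hfl : ∀ p ∈ Set.Icc (0:ℝ) 1, f p ≤ s * p + t)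
    (hfc : f c = s * c + t) :
    ConcaveOn ℝ (Set.Icc 0 1) (fun p => if p ≤ c then f p else s * p + t) := by
  apply concaveOn_of_slope_anti_adjacent (convex_Icc 0 1)
  intro x y z hx hz hxy hyz
  have hy : y ∈ Set.Icc (0:ℝ) 1 := ⟨le_trans hx.1 hxy.le, le_trans hyz.le hz.2⟩
  by_cases hzc : z ≤ c
  · have hxc : x ≤ c := le_of_lt (lt_of_lt_of_le (hxy.trans hyz) hzc)
    have hyc : y ≤ c := le_of_lt (lt_of_lt_of_le hyz hzc)
    simp only [if_pos hxc, if_pos hyc, if_pos hzc]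
    exact hf.slope_anti_adjacent ⟨hx.1, le_trans hxc hcd⟩
      ⟨le_trans hx.1 (hxy.trans hyz).le, le_trans hzc hcd⟩ hxy hyz
  · push_neg at hzc
    by_cases hxc : x ≤ c
    · by_cases hyc : y ≤ c
      · simp only [if_pos hxc, if_pos hyc, if_neg (not_le.mpr hzc)]
        rcases eq_or_lt_of_le hyc with h | h
        · subst h
          rw [hfc]
          have hx' := hfl x ⟨hx.1, le_trans hxy.le (le_trans hyz.le hz.2)⟩
          rw [div_le_div_iff₀ (by linarith) (by linarith)]
          nlinarith [hx']
        · have hslope1 := hf.slope_anti_adjacent (y := y)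
            ⟨hx.1, by linarith⟩ ⟨hc0, hcd⟩ hxy h
          have hy' := hfl y hy
          have h3 : (s * z + t - f y) / (z - y) ≤ (f c - f y) / (c - y) := by
            rw [div_le_div_iff₀ (by linarith) (by linarith), hfc]
            have hA : 0 ≤ s * y + t - f y := by linarith
            nlinarith [mul_nonneg hA (by linarith : (0:ℝ) ≤ z - c)]
          exact h3.trans hslope1
      · push_neg at hyc
        simp only [if_pos hxc, if_neg (not_le.mpr hyc), if_neg (not_le.mpr hzc)]
        have hx' := hfl x ⟨hx.1, by linarith [hz.2]⟩
        have hlz : (s * z + t - (s * y + t)) / (z - y) = s := by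
          rw [show s * z + t - (s * y + t) = s * (z - y) by ring, mul_div_assoc,
            div_self (by linarith : z - y ≠ 0), mul_one]
        rw [hlz, le_div_iff₀ (by linarith)]
        nlinarith [hx']
    · push_neg at hxc
      have hyc : ¬ y ≤ c := not_le.mpr (hxc.trans hxy)
      simp only [if_neg (not_le.mpr hxc), if_neg hyc, if_neg (not_le.mpr hzc)]
      have e1 : (s * z + t - (s * y + t)) / (z - y) = s := by
        rw [show s * z + t - (s * y + t) = s * (z - y) by ring, mul_div_assoc,
          div_self (by linarith : z - y ≠ 0), mul_one]
      have e2 : (s * y + t - (s * x + t)) / (y - x) = s := by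
        rw [show s * y + t - (s * x + t) = s * (y - x) by ring, mul_div_assoc,
          div_self (by linarith : y - x ≠ 0), mul_one]
      rw [e1, e2]

/-- Let `w` be a continuous strictly increasing probability weighting
function, concave on `[0, p̃]` and convex on `[p̃, 1]`, `w*` its minimum concave majorant,
and `p*` the smallest probability such that `w*` is affine on `[p*, 1]`.  If `p* < 1`,
then for every `p¹ ∈ [p*, 1)` and `p ∈ [p¹, 1]`,
`w p ≤ w p¹ + (p − p¹)(1 − w p¹)/(1 − p¹)`; equivalently,
`g(p) = (1 − w p)/(1 − p)` is nondecreasing on `[p*, 1)`. -/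
theorem stmt18
    (w : ℝ → ℝ)
    (hwc : ContinuousOn w (Set.Icc 0 1))
    (hwm : StrictMonoOn w (Set.Icc 0 1))
    (hw0 : w 0 = 0) (hw1 : w 1 = 1)
    (ptilde : ℝ) (hpt : ptilde ∈ Set.Icc (0 : ℝ) 1)
    (hconc : ConcaveOn ℝ (Set.Icc 0 ptilde) w)
    (hconv : ConvexOn ℝ (Set.Icc ptilde 1) w)
    (wstar : ℝ → ℝ)
    (hwsconc : ConcaveOn ℝ (Set.Icc 0 1) wstar)
    (hdom : ∀ p ∈ Set.Icc (0 : ℝ) 1, w p ≤ wstar p)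
    (hminimal : ∀ g : ℝ → ℝ, ConcaveOn ℝ (Set.Icc 0 1) g →
      (∀ p ∈ Set.Icc (0 : ℝ) 1, w p ≤ g p) → ∀ p ∈ Set.Icc (0 : ℝ) 1, wstar p ≤ g p)
    (pstar : ℝ) (hps : pstar ∈ Set.Icc (0 : ℝ) 1)
    (haff : ∃ a b : ℝ, ∀ p ∈ Set.Icc pstar 1, wstar p = a * p + b)
    (hpsmin : ∀ q ∈ Set.Icc (0 : ℝ) 1,
      (∃ a b : ℝ, ∀ p ∈ Set.Icc q 1, wstar p = a * p + b) → pstar ≤ q)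
    (hps1 : pstar < 1) :
    (∀ p1 ∈ Set.Ico pstar (1 : ℝ), ∀ p ∈ Set.Icc p1 (1 : ℝ),
        w p ≤ w p1 + (p - p1) * ((1 - w p1) / (1 - p1))) ∧
    MonotoneOn (fun p => (1 - w p) / (1 - p)) (Set.Ico pstar 1) := by
  obtain ⟨a, b, hLaff⟩ := haff
  obtain ⟨hpt0, hpt1⟩ := hpt
  obtain ⟨hps0, _⟩ := hps
  -- w ≤ 1 on [0,1]
  have hwle1 : ∀ p ∈ Set.Icc (0:ℝ) 1, w p ≤ 1 := by
    intro p hp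
    have := hwm.monotoneOn hp (Set.right_mem_Icc.mpr zero_le_one) hp.2
    linarith
  -- wstar 1 = 1
  have hws1 : wstar 1 = 1 := by
    have h1 : wstar 1 ≤ 1 :=
      hminimal (fun _ => 1) (concaveOn_const 1 (convex_Icc 0 1)) hwle1 1
        (Set.right_mem_Icc.mpr zero_le_one)
    have h2 : (1:ℝ) ≤ wstar 1 := by
      have := hdom 1 (Set.right_mem_Icc.mpr zero_le_one); linarith [hw1]
    linarith
  have hab : a + b = 1 := by
    have := hLaff 1 ⟨hps1.le, le_refl 1⟩
    rw [hws1] at this; linarith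
  have hwleL : ∀ p ∈ Set.Icc pstar 1, w p ≤ a * p + b := by
    intro p hp
    rw [← hLaff p hp]
    exact hdom p ⟨le_trans hps0 hp.1, hp.2⟩
  -- the crux: w pstar = wstar pstar = a * pstar + b
  have crux : w pstar = a * pstar + b := by
    rcases eq_or_lt_of_le hpt1 with hpt1e | hpt1l
    · -- ptilde = 1 : w is concave on [0,1], so wstar = w
      subst hpt1e
      have hle := hminimal w hconc (fun p _ => le_refl _) pstar ⟨hps0, hps1.le⟩
      have hge := hdom pstar ⟨hps0, hps1.le⟩
      have := hLaff pstar ⟨le_refl _, hps1.le⟩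
      linarith
    · -- ptilde < 1
      set G : ℝ → ℝ := fun p => (1 - w p) / (1 - p) with hG
      have hGcont : ContinuousOn G (Set.Icc 0 ptilde) := by
        apply ContinuousOn.div
        · exact continuousOn_const.sub (hwc.mono (Set.Icc_subset_Icc le_rfl hpt1))
        · exact continuousOn_const.sub continuousOn_id
        · intro x hx; have := hx.2; intro h; linarith [hpt1l]
      obtain ⟨c, hcmem, hcmin⟩ :=
        isCompact_Icc.exists_isMinOn (Set.nonempty_Icc.mpr hpt0) hGcont
      have hcmin' : ∀ x ∈ Set.Icc (0:ℝ) ptilde, G c ≤ G x := fun x hx => hcmin hx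
      obtain ⟨hc0, hcpt⟩ := hcmem
      have hc1 : c < 1 := lt_of_le_of_lt hcpt hpt1l
      set s := G c with hs
      -- chord dominates w on [0,1]
      have hdomc : ∀ x ∈ Set.Icc (0:ℝ) 1, w x ≤ s * x + (1 - s) := by
        intro x hx
        rcases eq_or_lt_of_le hx.2 with hx1 | hx1
        · rw [hx1, hw1]; nlinarith []
        · have hgx : s ≤ G x := by
            rcases le_or_gt x ptilde with hxp | hxp
            · exact hcmin' x ⟨hx.1, hxp⟩
            · -- ptilde < x < 1 : use convexity slopes
              have hsl := hconv.slope_mono_adjacent (y := x)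
                ⟨le_refl _, hpt1⟩ ⟨hpt1, le_refl _⟩ hxp hx1
              rw [hw1] at hsl
              have hpx : (0:ℝ) < x - ptilde := by linarith
              have h1x : (0:ℝ) < 1 - x := by linarith
              have hGpt : G ptilde ≤ G x := by
                rw [hG]
                simp only
                rw [div_le_div_iff₀ (by linarith) h1x]
                rw [div_le_div_iff₀ hpx h1x] at hsl
                nlinarith [hsl]
              exact le_trans (hcmin' ptilde ⟨hpt0, le_refl _⟩) hGpt
          have h1x : (0:ℝ) < 1 - x := by linarith
          rw [hG] at hgx
          simp only at hgx
          rw [le_div_iff₀ h1x] at hgx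
          nlinarith [hgx]
      have hwcc : w c = s * c + (1 - s) := by
        have h1c : (1:ℝ) - c ≠ 0 := by intro h; linarith
        rw [hs, hG]
        field_simp
        ring
      -- wstar ≤ chord everywhere
      have hwsch : ∀ p ∈ Set.Icc (0:ℝ) 1, wstar p ≤ s * p + (1 - s) :=
        hminimal _ (affine_concaveOn' _ (convex_Icc 0 1) s (1 - s)) hdomc
      -- wstar ≤ M, where M glues w on [0,c] with the chord
      have hMconc := glue_concave' w ptilde c s (1 - s) hc0 hcpt hpt1 hconc hdomc hwcc
      have hMdom : ∀ p ∈ Set.Icc (0:ℝ) 1,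
          w p ≤ (fun p => if p ≤ c then w p else s * p + (1 - s)) p := by
        intro p hp
        by_cases h : p ≤ c
        · simp [h]
        · simp only [if_neg h]; exact hdomc p hp
      have hwsM := hminimal _ hMconc hMdom
      -- wstar c = w c
      have hwsc : wstar c = w c := by
        have h1 := hwsM c ⟨hc0, hc1.le⟩
        simp only [if_pos (le_refl c)] at h1
        have h2 := hdom c ⟨hc0, hc1.le⟩
        linarith
      -- wstar = chord on [c,1]
      have hwschord : ∀ p ∈ Set.Icc c 1, wstar p = s * p + (1 - s) := by
        intro p hp
        refine le_antisymm (hwsch p ⟨le_trans hc0 hp.1, hp.2⟩) ?_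
        have h1c : (0:ℝ) < 1 - c := by linarith
        set la := (1 - p) / (1 - c) with hla
        set mu := (p - c) / (1 - c) with hmu
        have hla0 : 0 ≤ la := div_nonneg (by linarith [hp.2]) h1c.le
        have hmu0 : 0 ≤ mu := div_nonneg (by linarith [hp.1]) h1c.le
        have hlamu : la + mu = 1 := by rw [hla, hmu]; field_simp; ring
        have hcomb := hwsconc.2 (Set.mem_Icc.mpr ⟨hc0, hc1.le⟩)
          (Set.mem_Icc.mpr ⟨zero_le_one, le_refl _⟩) hla0 hmu0 hlamu
        have heq : la • c + mu • (1:ℝ) = p := by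
          simp only [smul_eq_mul, hla, hmu]; field_simp; ring
        rw [heq] at hcomb
        simp only [smul_eq_mul] at hcomb
        rw [hws1, hwsc, hwcc] at hcomb
        have : la * (s * c + (1 - s)) + mu * 1 = s * p + (1 - s) := by
          rw [hla, hmu]; field_simp; ring
        linarith
      -- hence pstar ≤ c, and wstar = w on [0,c]
      have hpsc : pstar ≤ c :=
        hpsmin c ⟨hc0, hc1.le⟩ ⟨s, 1 - s, hwschord⟩
      have h1 := hwsM pstar ⟨hps0, hps1.le⟩
      simp only [if_pos hpsc] at h1
      have h2 := hdom pstar ⟨hps0, hps1.le⟩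
      have h3 := hLaff pstar ⟨le_refl _, hps1.le⟩
      linarith
  -- derived facts
  have hg1a : ∀ p1, pstar ≤ p1 → p1 < 1 → a ≤ (1 - w p1) / (1 - p1) := by
    intro p1 h1 h2
    rw [le_div_iff₀ (by linarith : (0:ℝ) < 1 - p1)]
    have := hwleL p1 ⟨h1, h2.le⟩
    nlinarith
  -- KEY1 : chord bound on the concave side
  have KEY1 : ∀ p1, pstar ≤ p1 → p1 < 1 → p1 ≤ ptilde →
      ∀ p, p1 ≤ p → p ≤ ptilde → w p ≤ w p1 + (p - p1) * ((1 - w p1) / (1 - p1)) := by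
    intro p1 hp1l hp1u hp1t p hpl hpu
    have h1p1 : (0:ℝ) < 1 - p1 := by linarith
    rcases eq_or_lt_of_le hp1l with he | hlt
    · -- p1 = pstar
      have hwp1 : w p1 = a * p1 + b := by rw [← he]; exact crux
      have hgl : (1 - w p1) / (1 - p1) = a := by
        rw [hwp1, show 1 - (a * p1 + b) = a * (1 - p1) by nlinarith [hab],
          mul_div_assoc, div_self (by linarith : (1:ℝ) - p1 ≠ 0), mul_one]
      rw [hgl, hwp1]
      have := hwleL p ⟨by rw [he]; exact hpl, le_trans hpu hpt1⟩
      linarith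
    · rcases eq_or_lt_of_le hpl with he2 | hlt2
      · rw [he2]; simp
      · have hsl := hconc.slope_anti_adjacent (y := p1)
          ⟨hps0, le_trans hlt.le hp1t⟩ ⟨by linarith, hpu⟩ hlt hlt2
        have hsl2 : (w p1 - w pstar) / (p1 - pstar) ≤ a := by
          rw [div_le_iff₀ (by linarith : (0:ℝ) < p1 - pstar)]
          have h1 := hwleL p1 ⟨hp1l, hp1u.le⟩
          nlinarith [crux]
        have hfin : (w p - w p1) / (p - p1) ≤ (1 - w p1) / (1 - p1) :=
          le_trans hsl (le_trans hsl2 (hg1a p1 hp1l hp1u))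
        rw [div_le_iff₀ (by linarith : (0:ℝ) < p - p1)] at hfin
        nlinarith [hfin]
  -- the main chord inequality
  have KEY : ∀ p1 ∈ Set.Ico pstar (1 : ℝ), ∀ p ∈ Set.Icc p1 (1 : ℝ),
      w p ≤ w p1 + (p - p1) * ((1 - w p1) / (1 - p1)) := by
    rintro p1 ⟨hp1l, hp1u⟩ p ⟨hpl, hpu⟩
    have h1p1 : (0:ℝ) < 1 - p1 := by linarith
    by_cases hA : ptilde ≤ p1
    · -- convex side
      set la := (1 - p) / (1 - p1) with hla
      set mu := (p - p1) / (1 - p1) with hmu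
      have hla0 : 0 ≤ la := div_nonneg (by linarith) h1p1.le
      have hmu0 : 0 ≤ mu := div_nonneg (by linarith) h1p1.le
      have hlamu : la + mu = 1 := by rw [hla, hmu]; field_simp; ring
      have hcomb := hconv.2 (Set.mem_Icc.mpr ⟨hA, hp1u.le⟩)
        (Set.mem_Icc.mpr ⟨hpt1, le_refl _⟩) hla0 hmu0 hlamu
      have heq : la • p1 + mu • (1:ℝ) = p := by
        simp only [smul_eq_mul, hla, hmu]; field_simp; ring
      rw [heq, hw1] at hcomb
      simp only [smul_eq_mul] at hcomb
      have hrhs : w p1 + (p - p1) * ((1 - w p1) / (1 - p1)) = la * w p1 + mu * 1 := by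
        rw [hla, hmu]; field_simp; ring
      rw [hrhs]
      exact hcomb
    · push_neg at hA
      by_cases hB : p ≤ ptilde
      · exact KEY1 p1 hp1l hp1u hA.le p hpl hB
      · push_neg at hB
        have hpt1l : ptilde < 1 := lt_of_lt_of_le hB hpu
        have h1pt : (0:ℝ) < 1 - ptilde := by linarith
        have hwpt : w ptilde ≤ w p1 + (ptilde - p1) * ((1 - w p1) / (1 - p1)) :=
          KEY1 p1 hp1l hp1u hA.le ptilde hA.le (le_refl _)
        set la := (1 - p) / (1 - ptilde) with hla
        set mu := (p - ptilde) / (1 - ptilde) with hmu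
        have hla0 : 0 ≤ la := div_nonneg (by linarith) h1pt.le
        have hmu0 : 0 ≤ mu := div_nonneg (by linarith) h1pt.le
        have hlamu : la + mu = 1 := by rw [hla, hmu]; field_simp; ring
        have hcomb := hconv.2 (Set.mem_Icc.mpr ⟨le_refl _, hpt1⟩)
          (Set.mem_Icc.mpr ⟨hpt1, le_refl _⟩) hla0 hmu0 hlamu
        have heq : la • ptilde + mu • (1:ℝ) = p := by
          simp only [smul_eq_mul, hla, hmu]; field_simp; ring
        rw [heq, hw1] at hcomb
        simp only [smul_eq_mul] at hcomb
        have hCeq : la * (w p1 + (ptilde - p1) * ((1 - w p1) / (1 - p1))) + mu * 1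
            = w p1 + (p - p1) * ((1 - w p1) / (1 - p1)) := by
          rw [hla, hmu]; field_simp; ring
        calc w p ≤ la * w ptilde + mu * 1 := hcomb
          _ ≤ la * (w p1 + (ptilde - p1) * ((1 - w p1) / (1 - p1))) + mu * 1 :=
              add_le_add_left (mul_le_mul_of_nonneg_left hwpt hla0) _
          _ = _ := hCeq
  refine ⟨KEY, ?_⟩
  rintro p1 ⟨hp1l, hp1u⟩ p2 ⟨hp2l, hp2u⟩ h12
  simp only
  have h1p1 : (0:ℝ) < 1 - p1 := by linarith
  have h1p2 : (0:ℝ) < 1 - p2 := by linarith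
  have hk := KEY p1 ⟨hp1l, hp1u⟩ p2 ⟨h12, hp2u.le⟩
  have hid : (1 - p1) * ((1 - w p1) / (1 - p1)) = 1 - w p1 := by
    field_simp
  rw [le_div_iff₀ h1p2]
  nlinarith [hk, hid]
end
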